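/- arXiv:2210.00644 — 7 statements merged into one kernel-verified Lean document; each statement's English description precedes it below -/
import Mathlib

section
/- Let ρ > 0, and let A be a real n×n matrix, B a real n×m matrix, C a real p×n matrix, D a real p×m matrix, M a symmetric real p×p matrix, P a symmetric positive definite real n×n matrix, and λ ≥ 0 a real number. Suppose the linear matrix inequality [[AᵀPA − ρ²P, AᵀPB],[BᵀPA, BᵀPB]] + λ·[C D]ᵀ M [C D] ⪯ 0 holds (i.e., this symmetric (n+m)×(n+m) matrix is negative semidefinite). Let x : ℕ → ℝⁿ, u : ℕ → ℝᵐ, z : ℕ → ℝᵖ be sequences satisfying x_{k+1} = A x_k + B u_k and z_k = C x_k + D u_k for all k, and suppose the ρ-hard IQC sum condition holds: for every N, Σ_{k=0}^{N} ρ^{−2k} z_kᵀ M z_k ≥ 0. Then for all k ≥ 0, x_kᵀ P x_k ≤ ρ^{2k} x₀ᵀ P x₀, and consequently ‖x_k‖ ≤ √(cond(P)) · ρ^k · ‖x₀‖, where cond(P) is the ratio of the largest to the smallest eigenvalue of P. -/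
/-!
With `V x = xᵀ P x`, the LMI evaluated at `(x_k, u_k)` says
`V x_{k+1} + λ z_kᵀ M z_k ≤ ρ² V x_k`. Dividing by `ρ^{2(k+1)}` and summing telescopes to
`ρ^{-2k} V x_k + λ ρ^{-2} ∑_{j<k} ρ^{-2j} z_jᵀ M z_j ≤ V x_0`, and the ρ-hard IQC makes the sum
nonnegative. The norm bound then follows from `λ_min ‖x‖² ≤ V x ≤ λ_max ‖x‖²`.
-/

open Matrix Finset

variable {ι κ μ : Type*} [Fintype ι] [Fintype κ] [Fintype μ]

lemma Matrix.dotProduct_transpose_mul_mulVec {R : Type*} [CommSemiring R]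
    (A : Matrix κ ι R) (N : Matrix κ μ R) (v : ι → R) (w : μ → R) :
    v ⬝ᵥ ((Aᵀ * N) *ᵥ w) = (A *ᵥ v) ⬝ᵥ (N *ᵥ w) := by
  rw [← mulVec_mulVec, dotProduct_mulVec, vecMul_transpose]

lemma Matrix.dotProduct_transpose_mul_mul_mulVec {R : Type*} [CommSemiring R]
    (A : Matrix κ ι R) (N : Matrix κ κ R) (B : Matrix κ μ R) (v : ι → R) (w : μ → R) :
    v ⬝ᵥ ((Aᵀ * N * B) *ᵥ w) = (A *ᵥ v) ⬝ᵥ (N *ᵥ (B *ᵥ w)) := by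
  rw [Matrix.mul_assoc, dotProduct_transpose_mul_mulVec, mulVec_mulVec]

section Eigenvalues

variable [DecidableEq ι]

lemma Matrix.IsHermitian.exists_dotProduct_mulVec_eq_sum_eigenvalues {P : Matrix ι ι ℝ}
    (hP : P.IsHermitian) (v : ι → ℝ) :
    ∃ y : ι → ℝ, v ⬝ᵥ v = ∑ i, y i ^ 2 ∧ v ⬝ᵥ (P *ᵥ v) = ∑ i, hP.eigenvalues i * y i ^ 2 := by
  set U : Matrix ι ι ℝ := ↑hP.eigenvectorUnitary
  have hstar : star U = Uᵀ := by simp [star_eq_conjTranspose]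
  have hUUt : U * Uᵀ = 1 := by
    rw [← hstar]; exact Unitary.mul_star_self_of_mem hP.eigenvectorUnitary.2
  have hP_eq : P = Uᵀᵀ * (diagonal hP.eigenvalues * Uᵀ) := by
    have h := hP.spectral_theorem
    rw [Unitary.conjStarAlgAut_apply, hstar, mul_assoc] at h
    simpa using h
  refine ⟨Uᵀ *ᵥ v, ?_, ?_⟩
  · calc v ⬝ᵥ v = v ⬝ᵥ ((Uᵀᵀ * Uᵀ) *ᵥ v) := by rw [transpose_transpose, hUUt, one_mulVec]
      _ = ∑ i, (Uᵀ *ᵥ v) i ^ 2 := by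
        rw [dotProduct_transpose_mul_mulVec]; simp [dotProduct, sq]
  · calc v ⬝ᵥ (P *ᵥ v) = v ⬝ᵥ ((Uᵀᵀ * (diagonal hP.eigenvalues * Uᵀ)) *ᵥ v) := by rw [← hP_eq]
      _ = ∑ i, hP.eigenvalues i * (Uᵀ *ᵥ v) i ^ 2 := by
        rw [dotProduct_transpose_mul_mulVec, ← mulVec_mulVec]
        simp [mulVec_diagonal, dotProduct, sq, mul_left_comm]

lemma Matrix.IsHermitian.iInf_eigenvalues_mul_le {P : Matrix ι ι ℝ} (hP : P.IsHermitian)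
    (v : ι → ℝ) : (⨅ i, hP.eigenvalues i) * (v ⬝ᵥ v) ≤ v ⬝ᵥ (P *ᵥ v) := by
  obtain ⟨y, hv, hPv⟩ := hP.exists_dotProduct_mulVec_eq_sum_eigenvalues v
  rw [hv, hPv, mul_sum]
  gcongr with i
  exact ciInf_le (Set.finite_range _).bddBelow i

lemma Matrix.IsHermitian.le_iSup_eigenvalues_mul {P : Matrix ι ι ℝ} (hP : P.IsHermitian)
    (v : ι → ℝ) : v ⬝ᵥ (P *ᵥ v) ≤ (⨆ i, hP.eigenvalues i) * (v ⬝ᵥ v) := by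
  obtain ⟨y, hv, hPv⟩ := hP.exists_dotProduct_mulVec_eq_sum_eigenvalues v
  rw [hv, hPv, mul_sum]
  gcongr with i
  exact le_ciSup (Set.finite_range _).bddAbove i

lemma Matrix.PosDef.sqrt_dotProduct_le_of_le {P : Matrix ι ι ℝ} (hP : P.PosDef)
    {v w : ι → ℝ} {t : ℝ} (ht : 0 ≤ t) (h : w ⬝ᵥ (P *ᵥ w) ≤ t ^ 2 * (v ⬝ᵥ (P *ᵥ v))) :
    √(w ⬝ᵥ w) ≤ √((⨆ i, hP.1.eigenvalues i) / (⨅ i, hP.1.eigenvalues i)) * t * √(v ⬝ᵥ v) := by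
  cases isEmpty_or_nonempty ι with
  | inl _ => simp [dotProduct]
  | inr _ =>
    have ha : 0 < ⨅ i, hP.1.eigenvalues i := by
      obtain ⟨i, hi⟩ := exists_eq_ciInf_of_finite (f := hP.1.eigenvalues)
      exact hi ▸ hP.eigenvalues_pos i
    set a := ⨅ i, hP.1.eigenvalues i
    set b := ⨆ i, hP.1.eigenvalues i
    have hww : w ⬝ᵥ w ≤ b / a * t ^ 2 * (v ⬝ᵥ v) := by
      rw [div_mul_eq_mul_div, div_mul_eq_mul_div, le_div_iff₀ ha]
      calc w ⬝ᵥ w * a = a * (w ⬝ᵥ w) := mul_comm _ _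
        _ ≤ t ^ 2 * (v ⬝ᵥ (P *ᵥ v)) := (hP.1.iInf_eigenvalues_mul_le w).trans h
        _ ≤ t ^ 2 * (b * (v ⬝ᵥ v)) := by gcongr; exact hP.1.le_iSup_eigenvalues_mul v
        _ = b * t ^ 2 * (v ⬝ᵥ v) := by ring
    calc √(w ⬝ᵥ w) ≤ √(b / a * t ^ 2 * (v ⬝ᵥ v)) := Real.sqrt_le_sqrt hww
      _ = √(b / a) * t * √(v ⬝ᵥ v) := by
        rw [Real.sqrt_mul' _ (by simpa using dotProduct_self_star_nonneg v),
          Real.sqrt_mul' _ (sq_nonneg t), Real.sqrt_sq ht]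

end Eigenvalues

lemma Matrix.sumElim_dotProduct_fromBlocks_mulVec (A : Matrix ι ι ℝ) (B : Matrix ι κ ℝ)
    (P : Matrix ι ι ℝ) (r : ℝ) (x : ι → ℝ) (u : κ → ℝ) :
    Sum.elim x u ⬝ᵥ (fromBlocks (Aᵀ * P * A - r • P) (Aᵀ * P * B) (Bᵀ * P * A) (Bᵀ * P * B) *ᵥ
      Sum.elim x u) =
      (A *ᵥ x + B *ᵥ u) ⬝ᵥ (P *ᵥ (A *ᵥ x + B *ᵥ u)) - r * (x ⬝ᵥ (P *ᵥ x)) := by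
  simp only [fromBlocks_mulVec, sumElim_dotProduct_sumElim, Sum.elim_comp_inl, Sum.elim_comp_inr,
    sub_mulVec, smul_mulVec, dotProduct_add, dotProduct_sub, dotProduct_smul, smul_eq_mul,
    dotProduct_transpose_mul_mul_mulVec, mulVec_add, add_dotProduct]
  ring

lemma Matrix.sumElim_dotProduct_transpose_fromCols_mul_mulVec (C : Matrix μ ι ℝ) (D : Matrix μ κ ℝ)
    (M : Matrix μ μ ℝ) (x : ι → ℝ) (u : κ → ℝ) :
    Sum.elim x u ⬝ᵥ (((fromCols C D)ᵀ * M * fromCols C D) *ᵥ Sum.elim x u) =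
      (C *ᵥ x + D *ᵥ u) ⬝ᵥ (M *ᵥ (C *ᵥ x + D *ᵥ u)) := by
  rw [dotProduct_transpose_mul_mul_mulVec, fromCols_mulVec_sumElim]

lemma lmi_dissipation {A : Matrix ι ι ℝ} {B : Matrix ι κ ℝ} {C : Matrix μ ι ℝ} {D : Matrix μ κ ℝ}
    {M : Matrix μ μ ℝ} {P : Matrix ι ι ℝ} {r lam : ℝ}
    (hLMI : ∀ v : ι ⊕ κ → ℝ,
      v ⬝ᵥ ((fromBlocks (Aᵀ * P * A - r • P) (Aᵀ * P * B) (Bᵀ * P * A) (Bᵀ * P * B)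
            + lam • ((fromCols C D)ᵀ * M * fromCols C D)) *ᵥ v) ≤ 0)
    (x : ι → ℝ) (u : κ → ℝ) :
    (A *ᵥ x + B *ᵥ u) ⬝ᵥ (P *ᵥ (A *ᵥ x + B *ᵥ u)) +
        lam * ((C *ᵥ x + D *ᵥ u) ⬝ᵥ (M *ᵥ (C *ᵥ x + D *ᵥ u))) ≤ r * (x ⬝ᵥ (P *ᵥ x)) := by
  have h := hLMI (Sum.elim x u)
  rw [add_mulVec, dotProduct_add, smul_mulVec, dotProduct_smul, smul_eq_mul,
    sumElim_dotProduct_fromBlocks_mulVec, sumElim_dotProduct_transpose_fromCols_mul_mulVec] at h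
  linarith

lemma div_pow_add_sum_le_of_dissipation {V σ : ℕ → ℝ} {r c : ℝ} (hr : 0 < r)
    (hstep : ∀ k, V (k + 1) + c * σ k ≤ r * V k) (N : ℕ) :
    V N / r ^ N + c / r * ∑ k ∈ range N, (r ^ k)⁻¹ * σ k ≤ V 0 := by
  induction N with
  | zero => simp
  | succ N ih =>
    have hstepN : V (N + 1) / r ^ (N + 1) + c / r * ((r ^ N)⁻¹ * σ N) ≤ V N / r ^ N :=
      calc V (N + 1) / r ^ (N + 1) + c / r * ((r ^ N)⁻¹ * σ N)
          = (V (N + 1) + c * σ N) / r ^ (N + 1) := by field_simp; ring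
        _ ≤ r * V N / r ^ (N + 1) := by gcongr; exact hstep N
        _ = V N / r ^ N := by rw [pow_succ']; field_simp
    rw [sum_range_succ, mul_add]
    linarith

lemma le_pow_mul_of_dissipation {V σ : ℕ → ℝ} {r c : ℝ} (hr : 0 < r) (hc : 0 ≤ c)
    (hstep : ∀ k, V (k + 1) + c * σ k ≤ r * V k)
    (hσ : ∀ N, 0 ≤ ∑ k ∈ range (N + 1), (r ^ k)⁻¹ * σ k) (k : ℕ) : V k ≤ r ^ k * V 0 := by
  have hsum : 0 ≤ c / r * ∑ j ∈ range k, (r ^ j)⁻¹ * σ j := by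
    cases k with
    | zero => simp
    | succ N => exact mul_nonneg (div_nonneg hc hr.le) (hσ N)
  have h := div_pow_add_sum_le_of_dissipation hr hstep k
  rw [← div_le_iff₀' (pow_pos hr k)]
  linarith

theorem stmt_0_general {n m p : ℕ} (ρ : ℝ) (hρ : 0 < ρ)
    (A : Matrix (Fin n) (Fin n) ℝ) (B : Matrix (Fin n) (Fin m) ℝ)
    (C : Matrix (Fin p) (Fin n) ℝ) (D : Matrix (Fin p) (Fin m) ℝ)
    (M : Matrix (Fin p) (Fin p) ℝ)
    (P : Matrix (Fin n) (Fin n) ℝ) (hP : P.PosDef)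
    (lam : ℝ) (hlam : 0 ≤ lam)
    (hLMI : ∀ v : Fin n ⊕ Fin m → ℝ,
      v ⬝ᵥ ((Matrix.fromBlocks (Aᵀ * P * A - ρ ^ 2 • P) (Aᵀ * P * B)
              (Bᵀ * P * A) (Bᵀ * P * B)
            + lam • ((Matrix.fromCols C D)ᵀ * M * Matrix.fromCols C D)) *ᵥ v) ≤ 0)
    (x : ℕ → Fin n → ℝ) (u : ℕ → Fin m → ℝ) (z : ℕ → Fin p → ℝ)
    (hx : ∀ k, x (k + 1) = A *ᵥ x k + B *ᵥ u k)
    (hz : ∀ k, z k = C *ᵥ x k + D *ᵥ u k)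
    (hIQC : ∀ N : ℕ, 0 ≤ ∑ k ∈ Finset.range (N + 1),
      (ρ ^ (2 * k))⁻¹ * (z k ⬝ᵥ (M *ᵥ z k))) :
    ∀ k : ℕ,
      x k ⬝ᵥ (P *ᵥ x k) ≤ ρ ^ (2 * k) * (x 0 ⬝ᵥ (P *ᵥ x 0)) ∧
      Real.sqrt (x k ⬝ᵥ x k) ≤
        Real.sqrt ((⨆ i, hP.1.eigenvalues i) / (⨅ i, hP.1.eigenvalues i)) * ρ ^ k *
          Real.sqrt (x 0 ⬝ᵥ x 0) := by
  intro k
  have hstep (j : ℕ) : x (j + 1) ⬝ᵥ (P *ᵥ x (j + 1)) + lam * (z j ⬝ᵥ (M *ᵥ z j)) ≤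
      ρ ^ 2 * (x j ⬝ᵥ (P *ᵥ x j)) := by
    rw [hx, hz]; exact lmi_dissipation hLMI (x j) (u j)
  have hdecay := le_pow_mul_of_dissipation (V := fun j ↦ x j ⬝ᵥ (P *ᵥ x j)) (pow_pos hρ 2) hlam
    hstep (by simpa only [← pow_mul] using hIQC) k
  rw [← pow_mul] at hdecay
  refine ⟨hdecay, hP.sqrt_dotProduct_le_of_le (pow_nonneg hρ.le k) ?_⟩
  rwa [← pow_mul, mul_comm k]

/-- Convergence theorem of Lessard et al. for an LTI system in feedback with a
nonlinearity satisfying a ρ-hard IQC, stated on trajectories of the augmented system.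
The Euclidean norm is written as `Real.sqrt (x ⬝ᵥ x)` and
`cond P = λ_max(P) / λ_min(P)` via the eigenvalues of the positive definite matrix `P`. -/
theorem stmt_0 {n m p : ℕ} (ρ : ℝ) (hρ : 0 < ρ)
    (A : Matrix (Fin n) (Fin n) ℝ) (B : Matrix (Fin n) (Fin m) ℝ)
    (C : Matrix (Fin p) (Fin n) ℝ) (D : Matrix (Fin p) (Fin m) ℝ)
    (M : Matrix (Fin p) (Fin p) ℝ) (hM : M.IsSymm)
    (P : Matrix (Fin n) (Fin n) ℝ) (hPsymm : P.IsSymm) (hP : P.PosDef)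
    (lam : ℝ) (hlam : 0 ≤ lam)
    (hLMI : ∀ v : Fin n ⊕ Fin m → ℝ,
      v ⬝ᵥ ((Matrix.fromBlocks (Aᵀ * P * A - ρ ^ 2 • P) (Aᵀ * P * B)
              (Bᵀ * P * A) (Bᵀ * P * B)
            + lam • ((Matrix.fromCols C D)ᵀ * M * Matrix.fromCols C D)) *ᵥ v) ≤ 0)
    (x : ℕ → Fin n → ℝ) (u : ℕ → Fin m → ℝ) (z : ℕ → Fin p → ℝ)
    (hx : ∀ k, x (k + 1) = A *ᵥ x k + B *ᵥ u k)
    (hz : ∀ k, z k = C *ᵥ x k + D *ᵥ u k)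
    (hIQC : ∀ N : ℕ, 0 ≤ ∑ k ∈ Finset.range (N + 1),
      (ρ ^ (2 * k))⁻¹ * (z k ⬝ᵥ (M *ᵥ z k))) :
    ∀ k : ℕ,
      x k ⬝ᵥ (P *ᵥ x k) ≤ ρ ^ (2 * k) * (x 0 ⬝ᵥ (P *ᵥ x 0)) ∧
      Real.sqrt (x k ⬝ᵥ x k) ≤
        Real.sqrt ((⨆ i, hP.1.eigenvalues i) / (⨅ i, hP.1.eigenvalues i)) * ρ ^ k *
          Real.sqrt (x 0 ⬝ᵥ x 0) :=
  stmt_0_general ρ hρ A B C D M P hP lam hlam hLMI x u z hx hz hIQC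
end

section
/- Let 0 < m ≤ L, let ρ ∈ (0, 1], let K ≥ 1 be a natural number, and let h₁, …, h_K be real numbers satisfying 0 ≤ h_j ≤ 1 for all j = 1, …, K and Σ_{j=1}^{K} ρ^{−2j} h_j ≤ 1. Let f : ℝⁿ → ℝ be differentiable, m-strongly convex, with L-Lipschitz continuous gradient, and with ∇f(0) = 0. Let y : ℕ → ℝⁿ be any sequence, set u_k = ∇f(y_k), and define q_k = u_k − L y_k for k ≥ 0 and q_k = 0 for k < 0. Then for every N ≥ 0, Σ_{k=0}^{N} ρ^{−2k} · 2⟨Σ_{j=1}^{K} h_j q_{k−j} + L y_k − u_k, u_k − m y_k⟩ ≥ 0. -/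
open scoped RealInnerProductSpace

/-!
Put `g = f - (m / 2)‖·‖²`: it is convex and `(L - m)`-smooth with gradient `g' = ∇f - m • id`,
and `q = g' - (L - m) • id` along the trajectory. Co-coercivity of `g'` makes
`V x = (L - m) (g x - g 0) - ‖g' x‖² / 2` satisfy `V a - V b ≤ ⟪q b - q a, g' a⟫`, with
`V ≥ 0 = V 0`. As `h` has mass at most one and `q 0 = 0`, the `k`-th summand is at least
`V (y k) - ∑ j, h j * V (y (k - j))`. After weighting by `ρ^(-2k)`, each shifted sum is at most
`ρ^(-2j)` times the unshifted one, so `∑ j, ρ^(-2j) * h j ≤ 1` makes the total nonnegative.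
-/

theorem sum_range_pow_mul_shift_le {c : ℝ} (hc : 0 ≤ c) {B : ℤ → ℝ} (hB : ∀ i, 0 ≤ B i)
    (hBneg : ∀ i < 0, B i = 0) (N j : ℕ) :
    ∑ k ∈ Finset.range N, c ^ k * B (k - j) ≤ c ^ j * ∑ k ∈ Finset.range N, c ^ k * B k := by
  have hnonneg : ∀ k : ℕ, 0 ≤ c ^ k * B (k - j) := fun k => mul_nonneg (pow_nonneg hc k) (hB _)
  calc ∑ k ∈ Finset.range N, c ^ k * B (k - j)
      ≤ ∑ k ∈ Finset.range (j + N), c ^ k * B (k - j) :=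
        Finset.sum_le_sum_of_subset_of_nonneg (Finset.range_subset_range.2 (by omega))
          fun k _ _ => hnonneg k
    _ = c ^ j * ∑ k ∈ Finset.range N, c ^ k * B k := by
        rw [Finset.sum_range_add, Finset.mul_sum]
        rw [Finset.sum_eq_zero fun k hk => by
          rw [hBneg _ (by simp at hk; omega), mul_zero]]
        simp [pow_add, mul_assoc]

theorem sum_pow_mul_sub_sum_shift_nonneg {c : ℝ} (hc : 0 ≤ c) (s : Finset ℕ) (h : ℕ → ℝ)
    (B : ℤ → ℝ) (hh : ∀ j ∈ s, 0 ≤ h j) (hsum : ∑ j ∈ s, c ^ j * h j ≤ 1)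
    (hB : ∀ i, 0 ≤ B i) (hBneg : ∀ i < 0, B i = 0) (N : ℕ) :
    0 ≤ ∑ k ∈ Finset.range N, c ^ k * (B k - ∑ j ∈ s, h j * B (k - j)) := by
  set S := ∑ k ∈ Finset.range N, c ^ k * B k
  have hS : 0 ≤ S := Finset.sum_nonneg fun k _ => mul_nonneg (pow_nonneg hc k) (hB k)
  have hshift : ∑ k ∈ Finset.range N, c ^ k * ∑ j ∈ s, h j * B (k - j) ≤ S := by
    calc ∑ k ∈ Finset.range N, c ^ k * ∑ j ∈ s, h j * B (k - j)
        = ∑ j ∈ s, h j * ∑ k ∈ Finset.range N, c ^ k * B (k - j) := by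
          simp only [Finset.mul_sum]
          rw [Finset.sum_comm]
          exact Finset.sum_congr rfl fun _ _ => Finset.sum_congr rfl fun _ _ => by ring
      _ ≤ ∑ j ∈ s, h j * (c ^ j * S) :=
          Finset.sum_le_sum fun j hj => mul_le_mul_of_nonneg_left
            (sum_range_pow_mul_shift_le hc hB hBneg N j) (hh j hj)
      _ = (∑ j ∈ s, c ^ j * h j) * S := by
          rw [Finset.sum_mul]
          exact Finset.sum_congr rfl fun _ _ => by ring
      _ ≤ S := mul_le_of_le_one_left hS hsum
  simp only [mul_sub, Finset.sum_sub_distrib]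
  linarith

section InnerProductSpace

variable {E : Type*} [NormedAddCommGroup E] [InnerProductSpace ℝ E]

theorem HasGradientAt.hasDerivAt_add_smul [CompleteSpace E] {f : E → ℝ} {g x d : E} {t : ℝ}
    (hf : HasGradientAt f g (x + t • d)) :
    HasDerivAt (fun s : ℝ => f (x + s • d)) ⟪g, d⟫ t := by
  have hline : HasDerivAt (fun s : ℝ => x + s • d) d t := by
    simpa using ((hasDerivAt_id t).smul_const d).const_add x
  simpa [InnerProductSpace.toDual_apply_apply, Function.comp_def] using
    hf.hasFDerivAt.comp_hasDerivAt t hline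

/-- The descent lemma. -/
theorem le_add_inner_add_sq_of_lipschitz_gradient [CompleteSpace E] {f : E → ℝ} {f' : E → E}
    {L : ℝ} (hf : ∀ x, HasGradientAt f (f' x) x) (hlip : ∀ x y, ‖f' y - f' x‖ ≤ L * ‖y - x‖)
    (x y : E) : f y ≤ f x + ⟪f' x, y - x⟫ + L / 2 * ‖y - x‖ ^ 2 := by
  set d := y - x
  set χ : ℝ → ℝ := fun t => f (x + t • d) - t * ⟪f' x, d⟫ - L / 2 * ‖d‖ ^ 2 * t ^ 2
  have hχ : ∀ t, HasDerivAt χ (⟪f' (x + t • d), d⟫ - ⟪f' x, d⟫ - L * ‖d‖ ^ 2 * t) t := by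
    intro t
    have hline : HasDerivAt (fun s : ℝ => f (x + s • d)) ⟪f' (x + t • d), d⟫ t :=
      (hf (x + t • d)).hasDerivAt_add_smul
    have hsq := (hasDerivAt_pow 2 t).const_mul (L / 2 * ‖d‖ ^ 2)
    exact ((hline.sub (hasDerivAt_mul_const _)).sub hsq).congr_deriv (by ring)
  have hanti : AntitoneOn χ (Set.Icc 0 1) := by
    refine antitoneOn_of_hasDerivWithinAt_nonpos (convex_Icc 0 1)
      (fun t _ => (hχ t).continuousAt.continuousWithinAt) (fun t _ => (hχ t).hasDerivWithinAt) ?_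
    intro t ht
    rw [interior_Icc] at ht
    have hdist : ‖x + t • d - x‖ = t * ‖d‖ := by
      rw [add_sub_cancel_left, norm_smul, Real.norm_of_nonneg ht.1.le]
    have hcs : ⟪f' (x + t • d) - f' x, d⟫ ≤ L * (t * ‖d‖) * ‖d‖ :=
      (real_inner_le_norm _ _).trans <|
        mul_le_mul_of_nonneg_right (hdist ▸ hlip x (x + t • d)) (norm_nonneg d)
    rw [inner_sub_left] at hcs
    linarith
  have h10 : χ 1 ≤ χ 0 := hanti (by simp) (by simp) zero_le_one
  simp only [χ, one_smul, zero_smul, add_zero, one_mul, one_pow, mul_one, zero_mul, sub_zero,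
    ne_eq, OfNat.ofNat_ne_zero, not_false_eq_true, zero_pow, mul_zero, d, add_sub_cancel] at h10
  linarith

theorem sq_norm_sub_le_of_convex_of_smooth {g : E → ℝ} {g' : E → E} {L : ℝ} (hL : 0 ≤ L)
    (hconv : ∀ x y, g x + ⟪g' x, y - x⟫ ≤ g y)
    (hsmooth : ∀ x y, g y ≤ g x + ⟪g' x, y - x⟫ + L / 2 * ‖y - x‖ ^ 2) (x y : E) :
    ‖g' y - g' x‖ ^ 2 ≤ 2 * L * (g y - g x - ⟪g' x, y - x⟫) := by
  set w := g' y - g' x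
  -- compare the two bounds at the gradient step `y - t • w`
  have hstep : ∀ t : ℝ, t * ‖w‖ ^ 2 - L / 2 * t ^ 2 * ‖w‖ ^ 2 ≤ g y - g x - ⟪g' x, y - x⟫ := by
    intro t
    have hlow := hconv x (y - t • w)
    have hup := hsmooth y (y - t • w)
    have hw : ⟪g' y, w⟫ - ⟪g' x, w⟫ = ‖w‖ ^ 2 := by
      rw [← inner_sub_left, real_inner_self_eq_norm_sq]
    rw [show y - t • w - x = (y - x) - t • w by abel, inner_sub_right, real_inner_smul_right]
      at hlow
    rw [sub_sub_cancel_left, norm_neg, norm_smul, mul_pow, Real.norm_eq_abs, sq_abs,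
      inner_neg_right, real_inner_smul_right] at hup
    have ht : t * ‖w‖ ^ 2 = t * ⟪g' y, w⟫ - t * ⟪g' x, w⟫ := by rw [← hw]; ring
    linarith
  rcases hL.eq_or_lt with rfl | hL
  · by_contra! hpos
    have := hstep ((g y - g x - ⟪g' x, y - x⟫ + 1) / ‖w‖ ^ 2)
    simp only [zero_div, zero_mul, sub_zero] at this
    rw [div_mul_cancel₀ _ (by nlinarith)] at this
    linarith
  · have := hstep L⁻¹
    field_simp at this
    linarith

noncomputable def zamesFalbPotential (L : ℝ) (g : E → ℝ) (g' : E → E) (x : E) : ℝ :=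
  L * (g x - g 0) - ‖g' x‖ ^ 2 / 2

theorem zamesFalbPotential_sub_le {g : E → ℝ} {g' : E → E} {L : ℝ} (hL : 0 ≤ L)
    (hconv : ∀ x y, g x + ⟪g' x, y - x⟫ ≤ g y)
    (hsmooth : ∀ x y, g y ≤ g x + ⟪g' x, y - x⟫ + L / 2 * ‖y - x‖ ^ 2) (a b : E) :
    zamesFalbPotential L g g' a - zamesFalbPotential L g g' b
      ≤ ⟪(g' b - L • b) - (g' a - L • a), g' a⟫ := by
  have hcoco := sq_norm_sub_le_of_convex_of_smooth hL hconv hsmooth a b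
  have hexp := norm_sub_sq_real (g' b - g' a) (-g' a)
  simp only [sub_neg_eq_add, sub_add_cancel, inner_neg_right, norm_neg] at hexp
  have hrhs : ⟪(g' b - L • b) - (g' a - L • a), g' a⟫
      = ⟪g' b - g' a, g' a⟫ - L * ⟪g' a, b - a⟫ := by
    rw [show (g' b - L • b) - (g' a - L • a) = (g' b - g' a) - L • (b - a) by
      rw [smul_sub]; abel, inner_sub_left, real_inner_smul_left, real_inner_comm (g' a) (b - a)]
  rw [hrhs, zamesFalbPotential, zamesFalbPotential]
  nlinarith

theorem zamesFalbPotential_nonneg {g : E → ℝ} {g' : E → E} {L : ℝ} (hL : 0 ≤ L)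
    (hconv : ∀ x y, g x + ⟪g' x, y - x⟫ ≤ g y)
    (hsmooth : ∀ x y, g y ≤ g x + ⟪g' x, y - x⟫ + L / 2 * ‖y - x‖ ^ 2) (hg'0 : g' 0 = 0)
    (x : E) : 0 ≤ zamesFalbPotential L g g' x := by
  have := zamesFalbPotential_sub_le hL hconv hsmooth 0 x
  simpa [hg'0, zamesFalbPotential] using this

theorem sub_sum_mul_le_inner_sum_smul_sub {ι : Type*} (s : Finset ι) (h b : ι → ℝ) (v : ι → E)
    (a : ℝ) (q p : E) (hh : ∀ j ∈ s, 0 ≤ h j) (hsum : ∑ j ∈ s, h j ≤ 1)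
    (hv : ∀ j ∈ s, a - b j ≤ ⟪v j - q, p⟫) (hzero : a ≤ ⟪-q, p⟫) :
    a - ∑ j ∈ s, h j * b j ≤ ⟪∑ j ∈ s, h j • v j - q, p⟫ := by
  have hsplit : ⟪∑ j ∈ s, h j • v j - q, p⟫
      = ∑ j ∈ s, h j * ⟪v j - q, p⟫ + (1 - ∑ j ∈ s, h j) * ⟪-q, p⟫ := by
    simp only [inner_sub_left, sum_inner, real_inner_smul_left, inner_neg_left, mul_sub,
      Finset.sum_sub_distrib, ← Finset.sum_mul]
    ring
  have hcomb : ∑ j ∈ s, h j * (a - b j) ≤ ∑ j ∈ s, h j * ⟪v j - q, p⟫ :=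
    Finset.sum_le_sum fun j hj => mul_le_mul_of_nonneg_left (hv j hj) (hh j hj)
  have hrest := mul_le_mul_of_nonneg_left hzero (sub_nonneg.2 hsum)
  simp only [mul_sub, Finset.sum_sub_distrib, ← Finset.sum_mul] at hcomb
  linarith

theorem zamesFalb_weighted_sum_nonneg {g : E → ℝ} {g' : E → E} {L c : ℝ} (hL : 0 ≤ L)
    (hconv : ∀ x y, g x + ⟪g' x, y - x⟫ ≤ g y)
    (hsmooth : ∀ x y, g y ≤ g x + ⟪g' x, y - x⟫ + L / 2 * ‖y - x‖ ^ 2) (hg'0 : g' 0 = 0)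
    (hc : 1 ≤ c) (s : Finset ℕ) (h : ℕ → ℝ) (hh : ∀ j ∈ s, 0 ≤ h j)
    (hsum : ∑ j ∈ s, c ^ j * h j ≤ 1) (Y : ℤ → E) (hY : ∀ i < 0, Y i = 0) (N : ℕ) :
    0 ≤ ∑ k ∈ Finset.range N, c ^ k *
      ⟪∑ j ∈ s, h j • (g' (Y (k - j)) - L • Y (k - j)) - (g' (Y k) - L • Y k), g' (Y k)⟫ := by
  set V := zamesFalbPotential L g g'
  have hsum₁ : ∑ j ∈ s, h j ≤ 1 := (Finset.sum_le_sum fun j hj =>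
    le_mul_of_one_le_left (hh j hj) (one_le_pow₀ hc)).trans hsum
  have hpair : ∀ i k,
      V (Y k) - V (Y i) ≤ ⟪(g' (Y i) - L • Y i) - (g' (Y k) - L • Y k), g' (Y k)⟫ :=
    fun i k => zamesFalbPotential_sub_le hL hconv hsmooth _ _
  have hV0 : V 0 = 0 := by simp [V, zamesFalbPotential, hg'0]
  have hstep : ∀ k : ℤ, V (Y k) - ∑ j ∈ s, h j * V (Y (k - j))
      ≤ ⟪∑ j ∈ s, h j • (g' (Y (k - j)) - L • Y (k - j)) - (g' (Y k) - L • Y k), g' (Y k)⟫ := by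
    intro k
    have hzero := hpair (-1) k
    rw [hY (-1) (by norm_num), hV0, hg'0, smul_zero, sub_zero, sub_zero, zero_sub] at hzero
    exact sub_sum_mul_le_inner_sum_smul_sub _ h _ _ _ _ _ hh hsum₁ (fun j _ => hpair _ k) hzero
  refine (sum_pow_mul_sub_sum_shift_nonneg (by positivity) s h (fun i => V (Y i)) hh hsum
    (fun i => zamesFalbPotential_nonneg hL hconv hsmooth hg'0 _)
    (fun i hi => by rw [hY i hi, hV0]) N).trans ?_
  exact Finset.sum_le_sum fun k _ =>
    mul_le_mul_of_nonneg_left (hstep k) (pow_nonneg (zero_le_one.trans hc) k)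

theorem sub_half_sq_norm_convex {f : E → ℝ} {f' : E → E} {m : ℝ}
    (hsc : ∀ x y, f y ≥ f x + ⟪f' x, y - x⟫ + (m / 2) * ‖y - x‖ ^ 2) (x y : E) :
    f x - m / 2 * ‖x‖ ^ 2 + ⟪f' x - m • x, y - x⟫ ≤ f y - m / 2 * ‖y‖ ^ 2 := by
  have hy := norm_add_sq_real x (y - x)
  rw [add_sub_cancel] at hy
  rw [inner_sub_left, real_inner_smul_left, hy]
  linarith [hsc x y]

theorem sub_half_sq_norm_smooth [CompleteSpace E] {f : E → ℝ} {f' : E → E} {m L : ℝ}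
    (hf : ∀ x, HasGradientAt f (f' x) x) (hlip : ∀ x y, ‖f' y - f' x‖ ≤ L * ‖y - x‖)
    (x y : E) :
    f y - m / 2 * ‖y‖ ^ 2
      ≤ f x - m / 2 * ‖x‖ ^ 2 + ⟪f' x - m • x, y - x⟫ + (L - m) / 2 * ‖y - x‖ ^ 2 := by
  have hy := norm_add_sq_real x (y - x)
  rw [add_sub_cancel] at hy
  rw [inner_sub_left, real_inner_smul_left, hy]
  linarith [le_add_inner_add_sq_of_lipschitz_gradient hf hlip x y]

end InnerProductSpace

theorem stmt_4_general {n : ℕ} (m L ρ : ℝ) (hmL : m ≤ L)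
    (hρ₀ : 0 < ρ) (hρ₁ : ρ ≤ 1)
    (K : ℕ) (h : ℕ → ℝ)
    (hh : ∀ j ∈ Finset.Icc 1 K, 0 ≤ h j ∧ h j ≤ 1)
    (hhsum : ∑ j ∈ Finset.Icc 1 K, (ρ ^ (2 * j))⁻¹ * h j ≤ 1)
    (f : EuclideanSpace ℝ (Fin n) → ℝ)
    (f' : EuclideanSpace ℝ (Fin n) → EuclideanSpace ℝ (Fin n))
    (hdiff : ∀ x, HasGradientAt f (f' x) x)
    (hsc : ∀ x y, f y ≥ f x + ⟪f' x, y - x⟫ + (m / 2) * ‖y - x‖ ^ 2)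
    (hlip : ∀ x y, ‖f' y - f' x‖ ≤ L * ‖y - x‖)
    (hmin : f' 0 = 0)
    (y u : ℕ → EuclideanSpace ℝ (Fin n))
    (hu : ∀ k, u k = f' (y k))
    (q : ℤ → EuclideanSpace ℝ (Fin n))
    (hq : ∀ k : ℕ, q (k : ℤ) = u k - L • y k)
    (hqneg : ∀ k : ℤ, k < 0 → q k = 0) :
    ∀ N : ℕ, 0 ≤ ∑ k ∈ Finset.range (N + 1),
      (ρ ^ (2 * k))⁻¹ *
        (2 * ⟪(∑ j ∈ Finset.Icc 1 K, h j • q ((k : ℤ) - (j : ℤ))) + L • y k - u k,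
              u k - m • y k⟫) := by
  intro N
  set c := (ρ ^ 2)⁻¹
  have hweight : ∀ k : ℕ, (ρ ^ (2 * k))⁻¹ = c ^ k := fun k => by rw [pow_mul, inv_pow]
  have hc : 1 ≤ c := (one_le_inv₀ (by positivity)).2 (pow_le_one₀ hρ₀.le hρ₁)
  set g' := fun x => f' x - m • x
  set Y : ℤ → EuclideanSpace ℝ (Fin n) := fun i => if i < 0 then 0 else y i.toNat
  have hY : ∀ k : ℕ, Y k = y k := fun k => by simp [Y]
  have hqY : ∀ i, q i = g' (Y i) - (L - m) • Y i := by
    intro i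
    rcases lt_or_ge i 0 with hi | hi
    · simp [Y, hi, hqneg i hi, g', hmin]
    · obtain ⟨k, rfl⟩ := Int.eq_ofNat_of_zero_le hi
      simp only [hY, hq, hu, g', sub_smul]
      abel
  have hterm : ∀ k : ℕ,
      ⟪∑ j ∈ Finset.Icc 1 K, h j • q (k - j) + L • y k - u k, u k - m • y k⟫
        = ⟪∑ j ∈ Finset.Icc 1 K, h j • (g' (Y (k - j)) - (L - m) • Y (k - j))
            - (g' (Y k) - (L - m) • Y k), g' (Y k)⟫ := by
    intro k
    have hp : g' (Y k) = u k - m • y k := by simp only [g', hY, hu]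
    simp only [← hqY]
    rw [hp, hq, sub_sub_eq_add_sub]
  have hsum := zamesFalb_weighted_sum_nonneg (sub_nonneg.2 hmL) (sub_half_sq_norm_convex hsc)
    (sub_half_sq_norm_smooth hdiff hlip) (by simp [hmin]) hc _ h (fun j hj => (hh j hj).1)
    (by simpa only [hweight] using hhsum) Y (fun i hi => by simp [Y, hi]) (N + 1)
  simp only [hweight, hterm, mul_left_comm _ (2 : ℝ), ← Finset.mul_sum]
  exact mul_nonneg zero_le_two hsum

/-- The Zames–Falb (off-by-K) ρ-hard IQC (Lemma 3 of the paper), written explicitly: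
the filter stores the past K values of q_k = u_k − Ly_k (with q_k = 0 for k < 0), and
with M = [[0,I],[I,0]] the product z_kᵀMz_k equals
2⟨Σ_{j=1}^{K} h_j q_{k−j} + Ly_k − u_k, u_k − my_k⟩. -/
theorem stmt_4 {n : ℕ} (m L ρ : ℝ) (hm : 0 < m) (hmL : m ≤ L)
    (hρ₀ : 0 < ρ) (hρ₁ : ρ ≤ 1)
    (K : ℕ) (hK : 1 ≤ K) (h : ℕ → ℝ)
    (hh : ∀ j ∈ Finset.Icc 1 K, 0 ≤ h j ∧ h j ≤ 1)
    (hhsum : ∑ j ∈ Finset.Icc 1 K, (ρ ^ (2 * j))⁻¹ * h j ≤ 1)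
    (f : EuclideanSpace ℝ (Fin n) → ℝ)
    (f' : EuclideanSpace ℝ (Fin n) → EuclideanSpace ℝ (Fin n))
    (hdiff : ∀ x, HasGradientAt f (f' x) x)
    (hsc : ∀ x y, f y ≥ f x + ⟪f' x, y - x⟫ + (m / 2) * ‖y - x‖ ^ 2)
    (hlip : ∀ x y, ‖f' y - f' x‖ ≤ L * ‖y - x‖)
    (hmin : f' 0 = 0)
    (y u : ℕ → EuclideanSpace ℝ (Fin n))
    (hu : ∀ k, u k = f' (y k))
    (q : ℤ → EuclideanSpace ℝ (Fin n))
    (hq : ∀ k : ℕ, q (k : ℤ) = u k - L • y k)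
    (hqneg : ∀ k : ℤ, k < 0 → q k = 0) :
    ∀ N : ℕ, 0 ≤ ∑ k ∈ Finset.range (N + 1),
      (ρ ^ (2 * k))⁻¹ *
        (2 * ⟪(∑ j ∈ Finset.Icc 1 K, h j • q ((k : ℤ) - (j : ℤ))) + L • y k - u k,
              u k - m • y k⟫) :=
  stmt_4_general m L ρ hmL hρ₀ hρ₁ K h hh hhsum f f' hdiff hsc hlip hmin y u hu q hq hqneg
end

section
/- Let ρ > 0 and λ ≥ 0 be real numbers, and let v : ℕ → ℝ and w : ℕ → ℝ be sequences such that v_{k+1} − ρ² v_k + λ w_k ≤ 0 for all k ≥ 0, and such that Σ_{j=0}^{k−1} ρ^{−2j} w_j ≥ 0 for all k ≥ 1. Then v_k ≤ ρ^{2k} v₀ for all k ≥ 0. -/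
/-- The telescoping argument in the proof of Theorem 2: if
v_{k+1} − ρ²v_k + λw_k ≤ 0 for all k, and the weighted partial sums
Σ_{j=0}^{k−1} ρ^{−2j} w_j are nonnegative, then v_k ≤ ρ^{2k} v₀. -/
theorem stmt_6 (ρ lam : ℝ) (hρ : 0 < ρ) (hlam : 0 ≤ lam)
    (v w : ℕ → ℝ)
    (hdiss : ∀ k : ℕ, v (k + 1) - ρ ^ 2 * v k + lam * w k ≤ 0)
    (hsum : ∀ k : ℕ, 1 ≤ k → 0 ≤ ∑ j ∈ Finset.range k, (ρ ^ (2 * j))⁻¹ * w j) :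
    ∀ k : ℕ, v k ≤ ρ ^ (2 * k) * v 0 := by
  have hpow : ∀ k : ℕ, (0:ℝ) < ρ ^ (2 * k) := fun k => pow_pos hρ _
  set f : ℕ → ℝ := fun k =>
    (ρ ^ (2 * k))⁻¹ * v k + lam * (ρ ^ 2)⁻¹ * ∑ j ∈ Finset.range k, (ρ ^ (2 * j))⁻¹ * w j with hf
  have hstep : ∀ k : ℕ, f (k + 1) ≤ f k := by
    intro k
    have h := hdiss k
    have hk1 : ρ ^ (2 * (k + 1)) = ρ ^ (2 * k) * ρ ^ 2 := by ring
    simp only [hf, Finset.sum_range_succ, hk1, mul_inv]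
    have hinv : (0:ℝ) ≤ (ρ ^ (2 * k))⁻¹ * (ρ ^ 2)⁻¹ :=
      le_of_lt (by positivity)
    have h2 : (ρ ^ (2*k))⁻¹ * (ρ ^ 2)⁻¹ * (v (k+1) - ρ ^ 2 * v k + lam * w k) ≤ 0 :=
      mul_nonpos_of_nonneg_of_nonpos hinv h
    have e1 : (ρ ^ (2*k))⁻¹ * (ρ ^ 2)⁻¹ * (ρ ^ 2 * v k) = (ρ ^ (2*k))⁻¹ * v k := by
      field_simp
    nlinarith [h2, e1]
  have hmono : ∀ k : ℕ, f k ≤ f 0 := by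
    intro k
    induction k with
    | zero => exact le_refl _
    | succ n ih => exact le_trans (hstep n) ih
  intro k
  have hf0 : f 0 = v 0 := by simp [hf]
  have h1 : (ρ ^ (2 * k))⁻¹ * v k ≤ v 0 := by
    rcases Nat.eq_zero_or_pos k with rfl | hk
    · simp
    · have h3 := hmono k
      rw [hf0] at h3
      simp only [hf] at h3
      have hs := hsum k hk
      linarith [mul_nonneg (mul_nonneg hlam (le_of_lt (by positivity : (0:ℝ) < (ρ^2)⁻¹))) hs]
  calc v k = ρ ^ (2 * k) * ((ρ ^ (2 * k))⁻¹ * v k) := by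
        field_simp
    _ ≤ ρ ^ (2 * k) * v 0 := by
        exact mul_le_mul_of_nonneg_left h1 (le_of_lt (hpow k))
end

section
/- Let 0 < m ≤ L and α ≥ 0, and let f : ℝⁿ → ℝ be differentiable, m-strongly convex, with L-Lipschitz continuous gradient. Let x* ∈ ℝⁿ satisfy ∇f(x*) = 0. Then for every x ∈ ℝⁿ, ‖x − α∇f(x) − x*‖ ≤ max{|1 − αm|, |1 − αL|} · ‖x − x*‖. -/
/-!
With `u = x - x*` and `g = ∇f(x) = ∇f(x) - ∇f(x*)`, the interpolation inequality for `S(m, L)`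
(Nesterov, Thm. 2.1.12) is the sector condition `‖g‖² + m L ‖u‖² ≤ (m + L) ⟪g, u⟫`. It is
co-coercivity of the gradient of `f - (m/2)‖·‖²`, whose Bregman divergence lies between `0` and
`((L - m)/2)‖y - x‖²` by strong convexity and the descent lemma. Given the sector condition,
`⟪g, u⟫ ∈ [m‖u‖², L‖u‖²]` and `‖u - α g‖²` is bounded by an affine function of `⟪g, u⟫` whose
values at the endpoints are `(1 - α m)²‖u‖²` and `(1 - α L)²‖u‖²`.
-/

open scoped RealInnerProductSpace

theorem le_mul_of_forall_two_mul_sub_mul_sq_mul_le {a b K : ℝ} (hK : 0 ≤ K)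
    (h : ∀ t, 0 ≤ t → (2 * t - K * t ^ 2) * a ≤ b) : a ≤ K * b := by
  have hb : 0 ≤ b := by simpa using h 0 le_rfl
  rcases hK.eq_or_lt with rfl | hK
  · by_contra! ha'
    simp only [zero_mul] at ha'
    have := h ((b + 1) / a) (by positivity)
    rw [zero_mul, sub_zero, mul_assoc, div_mul_cancel₀ _ ha'.ne'] at this
    linarith
  · have := h K⁻¹ (by positivity)
    field_simp at this
    nlinarith

section Bregman

variable {E : Type*} [NormedAddCommGroup E] [InnerProductSpace ℝ E]

def bregman (f : E → ℝ) (f' : E → E) (x y : E) : ℝ := f y - f x - ⟪f' x, y - x⟫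

theorem bregman_le_of_lipschitz_gradient [CompleteSpace E] {f : E → ℝ} {f' : E → E} {L : ℝ}
    (hf : ∀ x, HasGradientAt f (f' x) x) (hlip : ∀ x y, ‖f' y - f' x‖ ≤ L * ‖y - x‖) (x y : E) :
    bregman f f' x y ≤ L / 2 * ‖y - x‖ ^ 2 := by
  set φ : ℝ → ℝ := fun t ↦ f (x + t • (y - x)) - t * ⟪f' x, y - x⟫ - L / 2 * t ^ 2 * ‖y - x‖ ^ 2
  have hφ : ∀ t, HasDerivAt φ
      (⟪f' (x + t • (y - x)), y - x⟫ - ⟪f' x, y - x⟫ - L * t * ‖y - x‖ ^ 2) t := by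
    intro t
    have hline : HasDerivAt (fun t : ℝ ↦ x + t • (y - x)) (y - x) t := by
      simpa using ((hasDerivAt_id t).smul_const (y - x)).const_add x
    have hcomp : HasDerivAt (fun t : ℝ ↦ f (x + t • (y - x))) ⟪f' (x + t • (y - x)), y - x⟫ t :=
      (hf _).hasFDerivAt.comp_hasDerivAt t hline
    refine ((hcomp.fun_sub ((hasDerivAt_id' t).mul_const _)).fun_sub
      (((hasDerivAt_pow 2 t).const_mul (L / 2)).mul_const _)).congr_deriv ?_
    ring
  have hanti : AntitoneOn φ (Set.Ici 0) := by
    refine antitoneOn_of_hasDerivWithinAt_nonpos (convex_Ici 0)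
      (fun t _ ↦ (hφ t).continuousAt.continuousWithinAt) (fun t _ ↦ (hφ t).hasDerivWithinAt) ?_
    intro t ht
    rw [interior_Ici, Set.mem_Ioi] at ht
    have hcs := real_inner_le_norm (f' (x + t • (y - x)) - f' x) (y - x)
    have hstep : ‖f' (x + t • (y - x)) - f' x‖ ≤ L * (t * ‖y - x‖) := by
      simpa [norm_smul, abs_of_pos ht] using hlip x (x + t • (y - x))
    rw [inner_sub_left] at hcs
    nlinarith [mul_le_mul_of_nonneg_right hstep (norm_nonneg (y - x))]
  have hφ₀ : φ 0 = f x := by simp [φ]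
  have hφ₁ : φ 1 = f y - ⟪f' x, y - x⟫ - L / 2 * ‖y - x‖ ^ 2 := by simp [φ]
  have := hanti (Set.mem_Ici.2 le_rfl) (Set.mem_Ici.2 zero_le_one) zero_le_one
  rw [bregman]
  linarith

theorem mul_norm_sq_le_bregman {f : E → ℝ} {f' : E → E} {K : ℝ}
    (hlow : ∀ x y, 0 ≤ bregman f f' x y) (hup : ∀ x y, bregman f f' x y ≤ K / 2 * ‖y - x‖ ^ 2)
    (x y : E) (t : ℝ) :
    (t - K / 2 * t ^ 2) * ‖f' y - f' x‖ ^ 2 ≤ bregman f f' x y := by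
  set d := f' y - f' x
  -- compare `f` at `y - t • d` with the lower bound at `x` and the upper bound at `y`
  have h₁ := hlow x (y - t • d)
  have h₂ := hup y (y - t • d)
  simp only [bregman] at h₁ h₂ ⊢
  have e₁ : y - t • d - x = (y - x) - t • d := by abel
  have e₂ : y - t • d - y = -(t • d) := by abel
  rw [e₁, inner_sub_right, real_inner_smul_right] at h₁
  rw [e₂, inner_neg_right, real_inner_smul_right, norm_neg, norm_smul, Real.norm_eq_abs,
    mul_pow, sq_abs] at h₂
  have hd : ⟪f' y, d⟫ - ⟪f' x, d⟫ = ‖d‖ ^ 2 := by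
    rw [← inner_sub_left, real_inner_self_eq_norm_sq]
  linear_combination h₁ + h₂ - t * hd

/-- Co-coercivity of the gradient (Baillon–Haddad). -/
theorem norm_sub_sq_le_mul_inner_of_bregman_bounds {f : E → ℝ} {f' : E → E} {K : ℝ} (hK : 0 ≤ K)
    (hlow : ∀ x y, 0 ≤ bregman f f' x y) (hup : ∀ x y, bregman f f' x y ≤ K / 2 * ‖y - x‖ ^ 2)
    (x y : E) : ‖f' x - f' y‖ ^ 2 ≤ K * ⟪f' x - f' y, x - y⟫ := by
  refine le_mul_of_forall_two_mul_sub_mul_sq_mul_le hK fun t _ ↦ ?_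
  have hxy := mul_norm_sq_le_bregman hlow hup x y t
  have hyx := mul_norm_sq_le_bregman hlow hup y x t
  have hsum : bregman f f' x y + bregman f f' y x = ⟪f' x - f' y, x - y⟫ := by
    simp only [bregman]
    rw [inner_sub_left, ← neg_sub x y, inner_neg_right]
    ring
  rw [norm_sub_rev] at hxy
  linarith

theorem bregman_sub_half_mul_norm_sq (f : E → ℝ) (f' : E → E) (m : ℝ) (x y : E) :
    bregman (fun z ↦ f z - m / 2 * ‖z‖ ^ 2) (fun z ↦ f' z - m • z) x y =
      bregman f f' x y - m / 2 * ‖y - x‖ ^ 2 := by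
  simp only [bregman, inner_sub_left, real_inner_smul_left, inner_sub_right, norm_sub_sq_real,
    real_inner_self_eq_norm_sq, real_inner_comm x y]
  ring

theorem norm_sub_sq_add_mul_le_of_bregman_bounds {f : E → ℝ} {f' : E → E} {m L : ℝ} (hmL : m ≤ L)
    (hlow : ∀ x y, m / 2 * ‖y - x‖ ^ 2 ≤ bregman f f' x y)
    (hup : ∀ x y, bregman f f' x y ≤ L / 2 * ‖y - x‖ ^ 2) (x y : E) :
    ‖f' x - f' y‖ ^ 2 + m * L * ‖x - y‖ ^ 2 ≤ (m + L) * ⟪f' x - f' y, x - y⟫ := by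
  have key := norm_sub_sq_le_mul_inner_of_bregman_bounds (sub_nonneg.2 hmL)
    (f := fun z ↦ f z - m / 2 * ‖z‖ ^ 2) (f' := fun z ↦ f' z - m • z)
    (fun x y ↦ by rw [bregman_sub_half_mul_norm_sq]; linarith [hlow x y])
    (fun x y ↦ by rw [bregman_sub_half_mul_norm_sq]; linarith [hup x y]) x y
  have e : f' x - m • x - (f' y - m • y) = (f' x - f' y) - m • (x - y) := by
    rw [smul_sub]; abel
  rw [e] at key
  set d := f' x - f' y
  set v := x - y
  clear_value d v
  rw [norm_sub_sq_real, inner_sub_left, real_inner_smul_right, real_inner_smul_left, norm_smul,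
    real_inner_self_eq_norm_sq, Real.norm_eq_abs, mul_pow, sq_abs] at key
  linear_combination key

theorem norm_sub_smul_le_max_mul_of_sector {u g : E} {m L : ℝ} (α : ℝ)
    (h : ‖g‖ ^ 2 + m * L * ‖u‖ ^ 2 ≤ (m + L) * ⟪g, u⟫) :
    ‖u - α • g‖ ≤ max |1 - α * m| |1 - α * L| * ‖u‖ := by
  set ρ := max |1 - α * m| |1 - α * L|
  set s := ⟪g, u⟫
  set N := ‖u‖ ^ 2
  have hN : 0 ≤ N := sq_nonneg _
  have hbetween : (s - m * N) * (s - L * N) ≤ 0 := by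
    have hcs : s ^ 2 ≤ ‖g‖ ^ 2 * N := by
      rw [← sq_abs, ← mul_pow]
      exact pow_le_pow_left₀ (abs_nonneg _) (abs_real_inner_le_norm g u) 2
    nlinarith [mul_le_mul_of_nonneg_left h hN]
  have hexpand : ‖u - α • g‖ ^ 2 ≤ (1 - α ^ 2 * m * L) * N + (α ^ 2 * (m + L) - 2 * α) * s := by
    rw [norm_sub_sq_real, real_inner_smul_right, norm_smul, Real.norm_eq_abs, mul_pow, sq_abs,
      real_inner_comm]
    nlinarith [mul_le_mul_of_nonneg_left h (sq_nonneg α)]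
  have hρm : (1 - α * m) ^ 2 ≤ ρ ^ 2 := by
    rw [← sq_abs]; exact pow_le_pow_left₀ (abs_nonneg _) (le_max_left _ _) 2
  have hρL : (1 - α * L) ^ 2 ≤ ρ ^ 2 := by
    rw [← sq_abs]; exact pow_le_pow_left₀ (abs_nonneg _) (le_max_right _ _) 2
  -- the bound `hexpand` is affine in `s ∈ [m N, L N]`, so it is largest at an endpoint
  have hsq : ‖u - α • g‖ ^ 2 ≤ ρ ^ 2 * N := by
    rcases mul_nonpos_iff.1 hbetween with ⟨h₁, h₂⟩ | ⟨h₁, h₂⟩ <;>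
    rcases le_total 0 (α ^ 2 * (m + L) - 2 * α) with hc | hc
    all_goals nlinarith [mul_le_mul_of_nonneg_right hρm hN, mul_le_mul_of_nonneg_right hρL hN]
  rwa [← sq_le_sq₀ (norm_nonneg _) (by positivity), mul_pow]

end Bregman

theorem stmt_8_general {n : ℕ} (m L α : ℝ) (hmL : m ≤ L)
    (f : EuclideanSpace ℝ (Fin n) → ℝ)
    (f' : EuclideanSpace ℝ (Fin n) → EuclideanSpace ℝ (Fin n))
    (hdiff : ∀ x, HasGradientAt f (f' x) x)
    (hsc : ∀ x y, f y ≥ f x + ⟪f' x, y - x⟫ + (m / 2) * ‖y - x‖ ^ 2)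
    (hlip : ∀ x y, ‖f' y - f' x‖ ≤ L * ‖y - x‖)
    (xstar : EuclideanSpace ℝ (Fin n)) (hstar : f' xstar = 0) :
    ∀ x, ‖x - α • f' x - xstar‖ ≤ max |1 - α * m| |1 - α * L| * ‖x - xstar‖ := by
  intro x
  have hsector := norm_sub_sq_add_mul_le_of_bregman_bounds hmL
    (fun x y ↦ by rw [bregman]; linarith [hsc x y]) (bregman_le_of_lipschitz_gradient hdiff hlip)
    x xstar
  rw [hstar, sub_zero] at hsector
  rw [sub_right_comm]
  exact norm_sub_smul_le_max_mul_of_sector α hsector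

/-- One-step contraction of a gradient step for f ∈ S(m, L) with stationary point x*:
‖x − α∇f(x) − x*‖ ≤ max{|1 − αm|, |1 − αL|}·‖x − x*‖. -/
theorem stmt_8 {n : ℕ} (m L α : ℝ) (hm : 0 < m) (hmL : m ≤ L) (hα : 0 ≤ α)
    (f : EuclideanSpace ℝ (Fin n) → ℝ)
    (f' : EuclideanSpace ℝ (Fin n) → EuclideanSpace ℝ (Fin n))
    (hdiff : ∀ x, HasGradientAt f (f' x) x)
    (hsc : ∀ x y, f y ≥ f x + ⟪f' x, y - x⟫ + (m / 2) * ‖y - x‖ ^ 2)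
    (hlip : ∀ x y, ‖f' y - f' x‖ ≤ L * ‖y - x‖)
    (xstar : EuclideanSpace ℝ (Fin n)) (hstar : f' xstar = 0) :
    ∀ x, ‖x - α • f' x - xstar‖ ≤ max |1 - α * m| |1 - α * L| * ‖x - xstar‖ :=
  stmt_8_general m L α hmL f f' hdiff hsc hlip xstar hstar
end

section
/- Let 0 < m ≤ L and α ≥ 0, and let f : ℝⁿ → ℝ be differentiable, m-strongly convex, with L-Lipschitz continuous gradient, with minimizer x* (so ∇f(x*) = 0). Let ξ : ℕ → ℝⁿ be the gradient descent iterates ξ_{k+1} = ξ_k − α∇f(ξ_k). Then for all k ≥ 0, ‖ξ_k − x*‖ ≤ (max{|1 − αm|, |1 − αL|})^k · ‖ξ₀ − x*‖. -/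
open scoped RealInnerProductSpace

/-!
Put `u = x - x⋆` and `g = ∇f(x)`. The function `f - (m/2)‖·‖²` is convex with an
`(L - m)`-Lipschitz gradient, hence cocoercive; since `∇f(x⋆) = 0` this yields the sector
condition `⟪g - m u, L u - g⟫ ≥ 0`, i.e. `g` lies in the ball of radius `(L - m)/2 ‖u‖` about
`(m + L)/2 u`. Writing `u - α g = (1 - α (m + L)/2) u - α (g - (m + L)/2 u)` then bounds one
gradient step by `(|1 - α (m + L)/2| + α (L - m)/2) ‖u‖ = max |1 - α m| |1 - α L| ‖u‖`.
-/

section InnerProductSpace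

variable {E : Type*} [NormedAddCommGroup E] [InnerProductSpace ℝ E]

section Cocoercive

variable {h : E → ℝ} {h' : E → E} {M : ℝ}

theorem mul_norm_sq_le_inner_of_convex_of_smooth
    (hconv : ∀ x y, h x + ⟪h' x, y - x⟫ ≤ h y)
    (hsmooth : ∀ x y, h y ≤ h x + ⟪h' x, y - x⟫ + M / 2 * ‖y - x‖ ^ 2) (x y : E) (t : ℝ) :
    (2 * t - M * t ^ 2) * ‖h' x - h' y‖ ^ 2 ≤ ⟪h' x - h' y, x - y⟫ := by
  -- compare both bounds at the point `y + t • (h' x - h' y)`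
  have gap : ∀ x y, (t - M / 2 * t ^ 2) * ‖h' x - h' y‖ ^ 2 ≤ h y - h x - ⟪h' x, y - x⟫ := by
    intro x y
    have lower := hconv x (y + t • (h' x - h' y))
    have upper := hsmooth y (y + t • (h' x - h' y))
    have hw : y + t • (h' x - h' y) - x = (y - x) + t • (h' x - h' y) := by abel
    simp only [hw, add_sub_cancel_left, inner_add_right, real_inner_smul_right, norm_smul,
      Real.norm_eq_abs, mul_pow, sq_abs] at lower upper
    have hsq : ‖h' x - h' y‖ ^ 2 = ⟪h' x, h' x - h' y⟫ - ⟪h' y, h' x - h' y⟫ := by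
      rw [← inner_sub_left, real_inner_self_eq_norm_sq]
    linear_combination lower + upper + t * hsq
  have hsymm : ⟪h' x - h' y, x - y⟫ =
      (h y - h x - ⟪h' x, y - x⟫) + (h x - h y - ⟪h' y, x - y⟫) := by
    rw [← neg_sub x y, inner_neg_right, inner_sub_left]
    ring
  have gap_yx := gap y x
  rw [norm_sub_rev] at gap_yx
  rw [hsymm]
  linarith [gap x y]

theorem norm_sq_le_mul_inner_of_convex_of_smooth (hM : 0 ≤ M)
    (hconv : ∀ x y, h x + ⟪h' x, y - x⟫ ≤ h y)
    (hsmooth : ∀ x y, h y ≤ h x + ⟪h' x, y - x⟫ + M / 2 * ‖y - x‖ ^ 2) (x y : E) :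
    ‖h' x - h' y‖ ^ 2 ≤ M * ⟪h' x - h' y, x - y⟫ := by
  have key := mul_norm_sq_le_inner_of_convex_of_smooth hconv hsmooth x y
  rcases hM.eq_or_lt with rfl | hM
  · -- here `2 t ‖h' x - h' y‖² ≤ ⟪h' x - h' y, x - y⟫` for every `t`
    by_contra! hpos
    rw [zero_mul] at hpos
    have hlarge := key ((⟪h' x - h' y, x - y⟫ + 1) / ‖h' x - h' y‖ ^ 2)
    rw [zero_mul, sub_zero, mul_assoc, div_mul_cancel₀ _ hpos.ne'] at hlarge
    linarith [key 0]
  · have hopt := key M⁻¹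
    field_simp at hopt
    linarith

end Cocoercive

section Gradient

variable [CompleteSpace E] {f : E → ℝ} {f' : E → E}

theorem HasGradientAt.hasDerivAt_comp_add_smul {x d : E} {t : ℝ} {g : E}
    (hf : HasGradientAt f g (x + t • d)) :
    HasDerivAt (fun s : ℝ => f (x + s • d)) ⟪g, d⟫ t := by
  have hline : HasDerivAt (fun s : ℝ => x + s • d) d t := by
    simpa using ((hasDerivAt_id t).smul_const d).const_add x
  exact (hasGradientAt_iff_hasFDerivAt.mp hf).comp_hasDerivAt t hline

theorem le_add_inner_add_mul_norm_sq_of_lipschitz_gradient {L : ℝ}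
    (hdiff : ∀ x, HasGradientAt f (f' x) x) (hlip : ∀ x y, ‖f' y - f' x‖ ≤ L * ‖y - x‖)
    (x y : E) : f y ≤ f x + ⟪f' x, y - x⟫ + L / 2 * ‖y - x‖ ^ 2 := by
  set d := y - x
  have hφ : ∀ t : ℝ, HasDerivAt (fun t => f (x + t • d) - t * ⟪f' x, d⟫)
      (⟪f' (x + t • d), d⟫ - ⟪f' x, d⟫) t := fun t =>
    ((hdiff _).hasDerivAt_comp_add_smul).sub (by simpa using (hasDerivAt_id t).mul_const _)
  have hB : ∀ t : ℝ, HasDerivAt (fun t => f x + L / 2 * t ^ 2 * ‖d‖ ^ 2) (L * t * ‖d‖ ^ 2) t :=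
    fun t => ((((hasDerivAt_pow 2 t).const_mul (L / 2)).mul_const (‖d‖ ^ 2)).const_add
      (f x)).congr_deriv (by push_cast; ring)
  have hbound : ∀ t ∈ Set.Ico (0 : ℝ) 1, ⟪f' (x + t • d), d⟫ - ⟪f' x, d⟫ ≤ L * t * ‖d‖ ^ 2 := by
    rintro t ⟨ht, -⟩
    have hstep : ‖f' (x + t • d) - f' x‖ ≤ L * (t * ‖d‖) := by
      simpa [norm_smul, abs_of_nonneg ht] using hlip x (x + t • d)
    calc ⟪f' (x + t • d), d⟫ - ⟪f' x, d⟫ = ⟪f' (x + t • d) - f' x, d⟫ := (inner_sub_left ..).symm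
      _ ≤ ‖f' (x + t • d) - f' x‖ * ‖d‖ := real_inner_le_norm _ _
      _ ≤ L * (t * ‖d‖) * ‖d‖ := by gcongr
      _ = L * t * ‖d‖ ^ 2 := by ring
  have hend := image_le_of_deriv_right_le_deriv_boundary
    (continuous_iff_continuousAt.2 fun t => (hφ t).continuousAt).continuousOn
    (fun t _ => (hφ t).hasDerivWithinAt) (by simp)
    (continuous_iff_continuousAt.2 fun t => (hB t).continuousAt).continuousOn
    (fun t _ => (hB t).hasDerivWithinAt) hbound (Set.right_mem_Icc.mpr zero_le_one)
  simp only [one_smul, one_mul, one_pow, d, add_sub_cancel] at hend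
  linarith

theorem inner_sector_nonneg_of_stronglyConvex_of_lipschitz_gradient {m L : ℝ} (hmL : m ≤ L)
    (hdiff : ∀ x, HasGradientAt f (f' x) x)
    (hsc : ∀ x y, f y ≥ f x + ⟪f' x, y - x⟫ + (m / 2) * ‖y - x‖ ^ 2)
    (hlip : ∀ x y, ‖f' y - f' x‖ ≤ L * ‖y - x‖) (x y : E) :
    0 ≤ ⟪(f' x - f' y) - m • (x - y), L • (x - y) - (f' x - f' y)⟫ := by
  -- `f - (m/2)‖·‖²` is convex with an `(L - m)`-Lipschitz gradient, hence cocoercive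
  have hsq : ∀ a b : E, ‖b‖ ^ 2 = ‖a‖ ^ 2 + 2 * ⟪a, b - a⟫ + ‖b - a‖ ^ 2 := fun a b => by
    simpa using norm_add_sq_real a (b - a)
  have hcoco := norm_sq_le_mul_inner_of_convex_of_smooth (sub_nonneg.mpr hmL)
    (h := fun z => f z - m / 2 * ‖z‖ ^ 2) (h' := fun z => f' z - m • z)
    (fun a b => by
      simp only [inner_sub_left, real_inner_smul_left]
      linear_combination hsc a b + m / 2 * hsq a b)
    (fun a b => by
      simp only [inner_sub_left, real_inner_smul_left]
      linear_combination le_add_inner_add_mul_norm_sq_of_lipschitz_gradient hdiff hlip a b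
        - m / 2 * hsq a b)
    x y
  have hw : f' x - m • x - (f' y - m • y) = (f' x - f' y) - m • (x - y) := by module
  have hsplit : L • (x - y) - (f' x - f' y) =
      (L - m) • (x - y) - ((f' x - f' y) - m • (x - y)) := by module
  rw [hw] at hcoco
  rw [hsplit, inner_sub_right, real_inner_smul_right, real_inner_self_eq_norm_sq]
  linarith

end Gradient

theorem norm_sub_smul_le_of_inner_sector_nonneg {m L : ℝ} (hmL : m ≤ L) {u a : E}
    (h : 0 ≤ ⟪a - m • u, L • u - a⟫) :
    ‖a - ((m + L) / 2) • u‖ ≤ (L - m) / 2 * ‖u‖ := by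
  have polarization :
      ‖a - ((m + L) / 2) • u‖ ^ 2 = ((L - m) / 2 * ‖u‖) ^ 2 - ⟪a - m • u, L • u - a⟫ := by
    simp only [norm_sub_sq_real, norm_smul, inner_sub_left, inner_sub_right,
      real_inner_smul_left, real_inner_smul_right, real_inner_self_eq_norm_sq,
      real_inner_comm a u, Real.norm_eq_abs, mul_pow, sq_abs]
    ring
  have hr : 0 ≤ (L - m) / 2 * ‖u‖ := mul_nonneg (by linarith) (norm_nonneg u)
  exact (pow_le_pow_iff_left₀ (norm_nonneg _) hr two_ne_zero).mp (by linarith)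

theorem norm_sub_smul_le_max_abs_mul {m L α : ℝ} (hα : 0 ≤ α) {u g : E}
    (hg : ‖g - ((m + L) / 2) • u‖ ≤ (L - m) / 2 * ‖u‖) :
    ‖u - α • g‖ ≤ max |1 - α * m| |1 - α * L| * ‖u‖ := by
  have hcoef : |1 - α * ((m + L) / 2)| + α * ((L - m) / 2) ≤ max |1 - α * m| |1 - α * L| := by
    rcases abs_cases (1 - α * ((m + L) / 2)) with ⟨h, _⟩ | ⟨h, _⟩ <;> rw [h]
    · linarith [le_abs_self (1 - α * m), le_max_left |1 - α * m| |1 - α * L|]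
    · linarith [neg_le_abs (1 - α * L), le_max_right |1 - α * m| |1 - α * L|]
  calc ‖u - α • g‖
      = ‖(1 - α * ((m + L) / 2)) • u - α • (g - ((m + L) / 2) • u)‖ := by congr 1; module
    _ ≤ |1 - α * ((m + L) / 2)| * ‖u‖ + α * ‖g - ((m + L) / 2) • u‖ := by
      grw [norm_sub_le, norm_smul, norm_smul, Real.norm_eq_abs, Real.norm_of_nonneg hα]
    _ ≤ |1 - α * ((m + L) / 2)| * ‖u‖ + α * ((L - m) / 2 * ‖u‖) := by grw [hg]
    _ = (|1 - α * ((m + L) / 2)| + α * ((L - m) / 2)) * ‖u‖ := by ring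
    _ ≤ max |1 - α * m| |1 - α * L| * ‖u‖ := by grw [hcoef]

end InnerProductSpace

theorem dist_le_pow_mul_of_forall_dist_le {X : Type*} [PseudoMetricSpace X] {T : X → X}
    {x₀ : X} {ρ : ℝ} (hρ : 0 ≤ ρ) (hT : ∀ x, dist (T x) x₀ ≤ ρ * dist x x₀) {ξ : ℕ → X}
    (hξ : ∀ k, ξ (k + 1) = T (ξ k)) (k : ℕ) : dist (ξ k) x₀ ≤ ρ ^ k * dist (ξ 0) x₀ := by
  induction k with
  | zero => simp
  | succ k ih =>
    calc dist (ξ (k + 1)) x₀ ≤ ρ * dist (ξ k) x₀ := hξ k ▸ hT (ξ k)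
      _ ≤ ρ * (ρ ^ k * dist (ξ 0) x₀) := by gcongr
      _ = ρ ^ (k + 1) * dist (ξ 0) x₀ := by ring

theorem stmt_9_general {n : ℕ} (m L α : ℝ) (hmL : m ≤ L) (hα : 0 ≤ α)
    (f : EuclideanSpace ℝ (Fin n) → ℝ)
    (f' : EuclideanSpace ℝ (Fin n) → EuclideanSpace ℝ (Fin n))
    (hdiff : ∀ x, HasGradientAt f (f' x) x)
    (hsc : ∀ x y, f y ≥ f x + ⟪f' x, y - x⟫ + (m / 2) * ‖y - x‖ ^ 2)
    (hlip : ∀ x y, ‖f' y - f' x‖ ≤ L * ‖y - x‖)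
    (xstar : EuclideanSpace ℝ (Fin n)) (hstar : f' xstar = 0)
    (ξ : ℕ → EuclideanSpace ℝ (Fin n))
    (hξ : ∀ k, ξ (k + 1) = ξ k - α • f' (ξ k)) :
    ∀ k : ℕ, ‖ξ k - xstar‖ ≤ (max |1 - α * m| |1 - α * L|) ^ k * ‖ξ 0 - xstar‖ := by
  have hρ : 0 ≤ max |1 - α * m| |1 - α * L| := (abs_nonneg _).trans (le_max_left _ _)
  have hstep : ∀ x, dist (x - α • f' x) xstar ≤ max |1 - α * m| |1 - α * L| * dist x xstar := by
    intro x
    have hsector := inner_sector_nonneg_of_stronglyConvex_of_lipschitz_gradient hmL hdiff hsc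
      hlip x xstar
    rw [hstar, sub_zero] at hsector
    rw [dist_eq_norm, dist_eq_norm, sub_right_comm]
    exact norm_sub_smul_le_max_abs_mul hα (norm_sub_smul_le_of_inner_sector_nonneg hmL hsector)
  intro k
  simpa only [dist_eq_norm] using dist_le_pow_mul_of_forall_dist_le hρ hstep hξ k

/-- Linear convergence of constant-step-size gradient descent for f ∈ S(m, L), at the
rate ρ = max{|1 − αm|, |1 − αL|} obtained from the sector IQC. -/
theorem stmt_9 {n : ℕ} (m L α : ℝ) (hm : 0 < m) (hmL : m ≤ L) (hα : 0 ≤ α)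
    (f : EuclideanSpace ℝ (Fin n) → ℝ)
    (f' : EuclideanSpace ℝ (Fin n) → EuclideanSpace ℝ (Fin n))
    (hdiff : ∀ x, HasGradientAt f (f' x) x)
    (hsc : ∀ x y, f y ≥ f x + ⟪f' x, y - x⟫ + (m / 2) * ‖y - x‖ ^ 2)
    (hlip : ∀ x y, ‖f' y - f' x‖ ≤ L * ‖y - x‖)
    (xstar : EuclideanSpace ℝ (Fin n)) (hstar : f' xstar = 0)
    (ξ : ℕ → EuclideanSpace ℝ (Fin n))
    (hξ : ∀ k, ξ (k + 1) = ξ k - α • f' (ξ k)) :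
    ∀ k : ℕ, ‖ξ k - xstar‖ ≤ (max |1 - α * m| |1 - α * L|) ^ k * ‖ξ 0 - xstar‖ :=
  stmt_9_general m L α hmL hα f f' hdiff hsc hlip xstar hstar ξ hξ
end

section
/- Let 0 < m ≤ L, α ≥ 0, and x* ∈ ℝⁿ. Let (f_k)_{k∈ℕ} be a sequence of differentiable functions f_k : ℝⁿ → ℝ, each m-strongly convex with L-Lipschitz continuous gradient and with ∇f_k(x*) = 0. Let ξ : ℕ → ℝⁿ satisfy ξ_{k+1} = ξ_k − α∇f_k(ξ_k) for all k. Then for all k ≥ 0, ‖ξ_k − x*‖ ≤ (max{|1 − αm|, |1 − αL|})^k · ‖ξ₀ − x*‖. -/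
/-!
Since every `f_k` is `m`-strongly convex with `L`-Lipschitz gradient, the convex function
`f_k - (m/2)‖·‖²` has gradient `∇f_k - m • id` satisfying the upper quadratic bound with constant
`L - m`, hence is `(L - m)`-cocoercive (Baillon–Haddad). Comparing with `x*`, where `∇f_k`
vanishes, the error `e = ξ_k - x*` and `g = ∇f_k(ξ_k)` satisfy the sector condition
`‖g - m e‖² ≤ (L - m)⟪g - m e, e⟫`, i.e. `g` lies in the ball of radius `(L - m)/2 ‖e‖` about
`((m + L)/2) e`. Then `‖e - α g‖ ≤ (|1 - α(m + L)/2| + α(L - m)/2)‖e‖ = max (1 - αm) (αL - 1) ‖e‖`.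
The condition involves only the current step, so the contraction iterates whatever `f_k` is.
-/

open scoped RealInnerProductSpace

section
variable {E : Type*} [NormedAddCommGroup E] [InnerProductSpace ℝ E]

theorem le_add_inner_add_mul_sq_of_lipschitz_gradient [CompleteSpace E] {f : E → ℝ}
    {f' : E → E} {L : ℝ} (hf : ∀ x, HasGradientAt f (f' x) x)
    (hL : ∀ x y, ‖f' y - f' x‖ ≤ L * ‖y - x‖) (x y : E) :
    f y ≤ f x + ⟪f' x, y - x⟫ + L / 2 * ‖y - x‖ ^ 2 := by
  set d := y - x
  let g : ℝ → ℝ := fun t ↦ f (x + t • d) - t * ⟪f' x, d⟫ - L / 2 * t ^ 2 * ‖d‖ ^ 2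
  have hg : ∀ t, HasDerivAt g (⟪f' (x + t • d) - f' x, d⟫ - L * t * ‖d‖ ^ 2) t := by
    intro t
    have hline : HasDerivAt (fun t : ℝ ↦ x + t • d) d t := by
      simpa using ((hasDerivAt_id t).smul_const d).const_add x
    refine ((((hf _).hasFDerivAt.comp_hasDerivAt t hline).sub
      ((hasDerivAt_id t).mul_const ⟪f' x, d⟫)).sub
      (((hasDerivAt_pow 2 t).const_mul (L / 2)).mul_const (‖d‖ ^ 2))).congr_deriv ?_
    rw [InnerProductSpace.toDual_apply_apply, inner_sub_left]
    push_cast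
    ring
  have hg_nonpos : ∀ t ∈ interior (Set.Icc (0 : ℝ) 1),
      ⟪f' (x + t • d) - f' x, d⟫ - L * t * ‖d‖ ^ 2 ≤ 0 := by
    intro t ht
    rw [interior_Icc] at ht
    have hinner : ⟪f' (x + t • d) - f' x, d⟫ ≤ L * t * ‖d‖ ^ 2 :=
      calc ⟪f' (x + t • d) - f' x, d⟫
          ≤ ‖f' (x + t • d) - f' x‖ * ‖d‖ := real_inner_le_norm _ _
        _ ≤ L * ‖t • d‖ * ‖d‖ := by
          gcongr
          simpa using hL x (x + t • d)
        _ = L * t * ‖d‖ ^ 2 := by rw [norm_smul, Real.norm_of_nonneg ht.1.le]; ring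
    linarith
  have hanti : AntitoneOn g (Set.Icc 0 1) :=
    antitoneOn_of_hasDerivWithinAt_nonpos (convex_Icc 0 1)
      (fun t _ ↦ (hg t).continuousAt.continuousWithinAt) (fun t _ ↦ (hg t).hasDerivWithinAt)
      hg_nonpos
  have h01 : g 1 ≤ g 0 :=
    hanti (Set.left_mem_Icc.2 zero_le_one) (Set.right_mem_Icc.2 zero_le_one) zero_le_one
  have hg0 : g 0 = f x := by simp [g]
  have hg1 : g 1 = f y - ⟪f' x, d⟫ - L / 2 * ‖d‖ ^ 2 := by simp [g, d]
  linarith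

section Cocoercivity
variable {h : E → ℝ} {h' : E → E} {K : ℝ}
  (hconv : ∀ x y, h x + ⟪h' x, y - x⟫ ≤ h y)
  (hsmooth : ∀ x y, h y ≤ h x + ⟪h' x, y - x⟫ + K / 2 * ‖y - x‖ ^ 2)
include hconv hsmooth

/-- Obtained by comparing `h` at `y + t • (h' x - h' y)` with its lower bound at `x` and its
upper bound at `y`; `t = 1 / K` gives the usual `1 / (2K)` gain, and letting `t` be free also
covers `K = 0`. -/
theorem add_inner_add_mul_sq_norm_gradient_sub_le (x y : E) (t : ℝ) :
    h x + ⟪h' x, y - x⟫ + (t - K / 2 * t ^ 2) * ‖h' x - h' y‖ ^ 2 ≤ h y := by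
  set w := h' x - h' y
  have hlower := hconv x (y + t • w)
  have hupper := hsmooth y (y + t • w)
  rw [show y + t • w - x = (y - x) + t • w by abel, inner_add_right, real_inner_smul_right]
    at hlower
  rw [add_sub_cancel_left, real_inner_smul_right, norm_smul, Real.norm_eq_abs, mul_pow,
    sq_abs] at hupper
  have hw : t * ‖w‖ ^ 2 = t * ⟪h' x, w⟫ - t * ⟪h' y, w⟫ := by
    rw [← mul_sub, ← inner_sub_left, real_inner_self_eq_norm_sq]
  linarith

theorem sq_norm_gradient_sub_le_mul_inner (hK : 0 ≤ K) (x y : E) :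
    ‖h' x - h' y‖ ^ 2 ≤ K * ⟪h' x - h' y, x - y⟫ := by
  set s := ‖h' x - h' y‖ ^ 2
  set p := ⟪h' x - h' y, x - y⟫
  have hquad : ∀ t, 0 ≤ K * s * (t * t) + -2 * s * t + p := by
    intro t
    have hxy := add_inner_add_mul_sq_norm_gradient_sub_le hconv hsmooth x y t
    have hyx := add_inner_add_mul_sq_norm_gradient_sub_le hconv hsmooth y x t
    rw [norm_sub_rev] at hyx
    have hp : p = -⟪h' x, y - x⟫ - ⟪h' y, x - y⟫ := by
      simp only [p, inner_sub_left, inner_sub_right]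
      ring
    nlinarith
  have hp : 0 ≤ p := by simpa using hquad 0
  have hdisc := discrim_le_zero hquad
  rw [discrim] at hdisc
  nlinarith [mul_nonneg hK hp]

end Cocoercivity

/-- The sector condition: `f - (m/2)‖·‖²` is convex with `(L - m)`-cocoercive gradient. -/
theorem sq_norm_sub_smul_le_mul_inner_of_strongConvex [CompleteSpace E] {f : E → ℝ}
    {f' : E → E} {m L : ℝ} (hmL : m ≤ L) (hf : ∀ x, HasGradientAt f (f' x) x)
    (hsc : ∀ x y, f x + ⟪f' x, y - x⟫ + m / 2 * ‖y - x‖ ^ 2 ≤ f y)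
    (hL : ∀ x y, ‖f' y - f' x‖ ≤ L * ‖y - x‖) (x y : E) :
    ‖f' x - f' y - m • (x - y)‖ ^ 2 ≤ (L - m) * ⟪f' x - f' y - m • (x - y), x - y⟫ := by
  have hquad : ∀ u v : E,
      m / 2 * ‖v - u‖ ^ 2 = m / 2 * ‖v‖ ^ 2 - m / 2 * ‖u‖ ^ 2 - ⟪m • u, v - u⟫ := by
    intro u v
    rw [real_inner_smul_left, inner_sub_right, norm_sub_sq_real, real_inner_self_eq_norm_sq,
      real_inner_comm]
    ring
  have hconv : ∀ u v, (f u - m / 2 * ‖u‖ ^ 2) + ⟪f' u - m • u, v - u⟫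
      ≤ f v - m / 2 * ‖v‖ ^ 2 := by
    intro u v
    rw [inner_sub_left]
    linarith [hsc u v, hquad u v]
  have hsmooth : ∀ u v, f v - m / 2 * ‖v‖ ^ 2
      ≤ (f u - m / 2 * ‖u‖ ^ 2) + ⟪f' u - m • u, v - u⟫ + (L - m) / 2 * ‖v - u‖ ^ 2 := by
    intro u v
    rw [inner_sub_left]
    linarith [le_add_inner_add_mul_sq_of_lipschitz_gradient hf hL u v, hquad u v]
  have := sq_norm_gradient_sub_le_mul_inner hconv hsmooth (sub_nonneg.2 hmL) x y
  rwa [sub_sub_sub_comm, ← smul_sub] at this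

theorem norm_sub_smul_le_of_sector {m L : ℝ} (hmL : m ≤ L) {e g : E}
    (hsec : ‖g - m • e‖ ^ 2 ≤ (L - m) * ⟪g - m • e, e⟫) :
    ‖g - ((m + L) / 2) • e‖ ≤ (L - m) / 2 * ‖e‖ := by
  have hsplit : g - ((m + L) / 2) • e = (g - m • e) - ((L - m) / 2) • e := by
    match_scalars <;> ring
  refine (sq_le_sq₀ (norm_nonneg _) (by nlinarith [norm_nonneg e])).1 ?_
  rw [hsplit, norm_sub_sq_real, real_inner_smul_right, norm_smul,
    Real.norm_of_nonneg (by linarith)]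
  nlinarith

theorem norm_sub_smul_le_max_abs_mul_norm_of_sector {m L α : ℝ} (hmL : m ≤ L) (hα : 0 ≤ α)
    {e g : E} (hsec : ‖g - m • e‖ ^ 2 ≤ (L - m) * ⟪g - m • e, e⟫) :
    ‖e - α • g‖ ≤ max |1 - α * m| |1 - α * L| * ‖e‖ := by
  -- `|(a + b)/2| + (a - b)/2 = max a (-b)` for `a = 1 - α m`, `b = 1 - α L`.
  have hcoef : |1 - α * ((m + L) / 2)| + α * ((L - m) / 2) ≤ max |1 - α * m| |1 - α * L| := by
    rcases abs_cases (1 - α * ((m + L) / 2)) with ⟨habs, -⟩ | ⟨habs, -⟩ <;> rw [habs]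
    · exact le_max_of_le_left (by linarith [le_abs_self (1 - α * m)])
    · exact le_max_of_le_right (by linarith [neg_abs_le (1 - α * L)])
  calc ‖e - α • g‖ = ‖(1 - α * ((m + L) / 2)) • e - α • (g - ((m + L) / 2) • e)‖ := by
        congr 1; match_scalars <;> ring
    _ ≤ |1 - α * ((m + L) / 2)| * ‖e‖ + α * ((L - m) / 2 * ‖e‖) := by
        refine (norm_sub_le _ _).trans ?_
        rw [norm_smul, norm_smul, Real.norm_eq_abs, Real.norm_of_nonneg hα]
        gcongr
        exact norm_sub_smul_le_of_sector hmL hsec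
    _ = (|1 - α * ((m + L) / 2)| + α * ((L - m) / 2)) * ‖e‖ := by ring
    _ ≤ max |1 - α * m| |1 - α * L| * ‖e‖ := by gcongr

end

theorem stmt_11_general {n : ℕ} (m L α : ℝ) (hmL : m ≤ L) (hα : 0 ≤ α)
    (xstar : EuclideanSpace ℝ (Fin n))
    (f : ℕ → EuclideanSpace ℝ (Fin n) → ℝ)
    (f' : ℕ → EuclideanSpace ℝ (Fin n) → EuclideanSpace ℝ (Fin n))
    (hdiff : ∀ k x, HasGradientAt (f k) (f' k x) x)
    (hsc : ∀ k x y, f k y ≥ f k x + ⟪f' k x, y - x⟫ + (m / 2) * ‖y - x‖ ^ 2)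
    (hlip : ∀ k x y, ‖f' k y - f' k x‖ ≤ L * ‖y - x‖)
    (hstar : ∀ k, f' k xstar = 0)
    (ξ : ℕ → EuclideanSpace ℝ (Fin n))
    (hξ : ∀ k, ξ (k + 1) = ξ k - α • f' k (ξ k)) :
    ∀ k : ℕ, ‖ξ k - xstar‖ ≤ (max |1 - α * m| |1 - α * L|) ^ k * ‖ξ 0 - xstar‖ := by
  set ρ := max |1 - α * m| |1 - α * L|
  have hstep : ∀ k, ‖ξ (k + 1) - xstar‖ ≤ ρ * ‖ξ k - xstar‖ := by
    intro k
    have hsec := sq_norm_sub_smul_le_mul_inner_of_strongConvex hmL (hdiff k) (hsc k) (hlip k)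
      (ξ k) xstar
    rw [hstar, sub_zero] at hsec
    rw [hξ, sub_right_comm]
    exact norm_sub_smul_le_max_abs_mul_norm_of_sector hmL hα hsec
  intro k
  induction k with
  | zero => simp
  | succ k ih =>
    calc ‖ξ (k + 1) - xstar‖ ≤ ρ * ‖ξ k - xstar‖ := hstep k
      _ ≤ ρ * (ρ ^ k * ‖ξ 0 - xstar‖) := by gcongr
      _ = ρ ^ (k + 1) * ‖ξ 0 - xstar‖ := by ring

/-- Time-varying objectives: since the sector constraint is pointwise in time, the
gradient-descent rate bound max{|1 − αm|, |1 − αL|} holds even when the objective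
function varies arbitrarily from step to step, as long as each f_k is m-strongly
convex with L-Lipschitz gradient and common stationary point x*. -/
theorem stmt_11 {n : ℕ} (m L α : ℝ) (hm : 0 < m) (hmL : m ≤ L) (hα : 0 ≤ α)
    (xstar : EuclideanSpace ℝ (Fin n))
    (f : ℕ → EuclideanSpace ℝ (Fin n) → ℝ)
    (f' : ℕ → EuclideanSpace ℝ (Fin n) → EuclideanSpace ℝ (Fin n))
    (hdiff : ∀ k x, HasGradientAt (f k) (f' k x) x)
    (hsc : ∀ k x y, f k y ≥ f k x + ⟪f' k x, y - x⟫ + (m / 2) * ‖y - x‖ ^ 2)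
    (hlip : ∀ k x y, ‖f' k y - f' k x‖ ≤ L * ‖y - x‖)
    (hstar : ∀ k, f' k xstar = 0)
    (ξ : ℕ → EuclideanSpace ℝ (Fin n))
    (hξ : ∀ k, ξ (k + 1) = ξ k - α • f' k (ξ k)) :
    ∀ k : ℕ, ‖ξ k - xstar‖ ≤ (max |1 - α * m| |1 - α * L|) ^ k * ‖ξ 0 - xstar‖ :=
  stmt_11_general m L α hmL hα xstar f f' hdiff hsc hlip hstar ξ hξ
end

section
/- Let 0 < m ≤ L, let 1 ≤ c < 2, and let f : ℝⁿ → ℝ be differentiable, m-strongly convex, with L-Lipschitz continuous gradient, with minimizer x* (so ∇f(x*) = 0). Let α : ℕ → ℝ be any sequence of step sizes with 1/(cL) ≤ α_k ≤ c/L for all k, and let ξ : ℕ → ℝⁿ satisfy ξ_{k+1} = ξ_k − α_k∇f(ξ_k). Then for all k ≥ 0, ‖ξ_k − x*‖ ≤ ρ̄^k · ‖ξ₀ − x*‖, where ρ̄ = max{c − 1, 1 − m/(cL)} < 1. -/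
/-!
Write `d = x - x*` and `g = ∇f x - ∇f x* = ∇f x`. The function `f - (m/2)‖·‖²` is convex and, by
the descent lemma for `f`, obeys the quadratic upper bound with constant `L - m`; the
Baillon–Haddad argument turns these two bounds into co-coercivity of its gradient, which for `f`
reads `⟪g - m d, g - L d⟫ ≤ 0`. Equivalently `g` lies in the ball of radius `(L - m)‖d‖/2` about
`(m + L) d / 2`, so writing `d - α g = (1 - α(m + L)/2) d - α (g - (m + L) d / 2)` gives
`‖d - α g‖ ≤ (|1 - α(m + L)/2| + |α|(L - m)/2) ‖d‖ = max |1 - αm| |1 - αL| · ‖d‖`,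
and on `[1/(cL), c/L]` this factor is at most `max (c - 1) (1 - m/(cL))`.
-/

open scoped RealInnerProductSpace

theorem abs_add_div_two_add_abs_sub_div_two (a b : ℝ) :
    |(a + b) / 2| + |(a - b) / 2| = max |a| |b| := by
  rcases abs_cases a with ha | ha <;> rcases abs_cases b with hb | hb <;>
    rcases abs_cases ((a + b) / 2) with h₁ | h₁ <;> rcases abs_cases ((a - b) / 2) with h₂ | h₂ <;>
    simp only [max_def] <;> split_ifs <;> linarith

section InnerProductSpace

variable {E : Type*} [NormedAddCommGroup E] [InnerProductSpace ℝ E]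

theorem norm_sub_smul_le_of_inner_nonpos {m L : ℝ} {d g : E}
    (hg : ⟪g - m • d, g - L • d⟫ ≤ 0) (α : ℝ) :
    ‖d - α • g‖ ≤ max |1 - α * m| |1 - α * L| * ‖d‖ := by
  set c := (m + L) / 2
  have hball : ‖g - c • d‖ ≤ |(L - m) / 2| * ‖d‖ := by
    have hpolar : ‖g - c • d‖ ^ 2 = ⟪g - m • d, g - L • d⟫ + (|(L - m) / 2| * ‖d‖) ^ 2 := by
      rw [mul_pow, sq_abs, norm_sub_sq_real, inner_sub_left, inner_sub_right, inner_sub_right]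
      simp only [c, inner_smul_left, inner_smul_right, norm_smul, real_inner_self_eq_norm_sq,
        real_inner_comm d g, RCLike.conj_to_real, Real.norm_eq_abs, mul_pow, sq_abs]
      ring
    exact (pow_le_pow_iff_left₀ (norm_nonneg _) (by positivity) two_ne_zero).1 (by linarith)
  have hradius : |α| * |(L - m) / 2| = |((1 - α * m) - (1 - α * L)) / 2| := by
    rw [← abs_mul]; ring_nf
  calc ‖d - α • g‖ = ‖(1 - α * c) • d - α • (g - c • d)‖ := by congr 1; module
    _ ≤ |1 - α * c| * ‖d‖ + |α| * ‖g - c • d‖ := by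
      refine (norm_sub_le _ _).trans_eq ?_
      rw [norm_smul, norm_smul, Real.norm_eq_abs, Real.norm_eq_abs]
    _ ≤ |1 - α * c| * ‖d‖ + |α| * (|(L - m) / 2| * ‖d‖) := by gcongr
    _ = (|((1 - α * m) + (1 - α * L)) / 2| + |((1 - α * m) - (1 - α * L)) / 2|) * ‖d‖ := by
      rw [← hradius, show 1 - α * c = ((1 - α * m) + (1 - α * L)) / 2 by ring]; ring
    _ = max |1 - α * m| |1 - α * L| * ‖d‖ := by rw [abs_add_div_two_add_abs_sub_div_two]

theorem norm_sq_eq_norm_sq_add_inner_add (x y : E) :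
    ‖y‖ ^ 2 = ‖x‖ ^ 2 + 2 * ⟪x, y - x⟫ + ‖y - x‖ ^ 2 := by
  simpa using norm_add_sq_real x (y - x)

theorem norm_sub_sq_le_mul_inner_sub_of_pos {h : E → ℝ} {h' : E → E} {K : ℝ} (hK : 0 < K)
    (hlow : ∀ x y, h x + ⟪h' x, y - x⟫ ≤ h y)
    (hup : ∀ x y, h y ≤ h x + ⟪h' x, y - x⟫ + K / 2 * ‖y - x‖ ^ 2) (x y : E) :
    ‖h' y - h' x‖ ^ 2 ≤ K * ⟪h' y - h' x, y - x⟫ := by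
  have key : ∀ a b, h a + ⟪h' a, b - a⟫ + ‖h' b - h' a‖ ^ 2 / K / 2 ≤ h b := by
    intro a b
    set Δ := h' b - h' a
    have hlow' := hlow a (b - K⁻¹ • Δ)
    have hup' := hup b (b - K⁻¹ • Δ)
    rw [show b - K⁻¹ • Δ - a = (b - a) - K⁻¹ • Δ by abel, inner_sub_right,
      real_inner_smul_right] at hlow'
    rw [show b - K⁻¹ • Δ - b = -(K⁻¹ • Δ) by abel, inner_neg_right, norm_neg,
      real_inner_smul_right, norm_smul, Real.norm_of_nonneg (inv_nonneg.2 hK.le)] at hup'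
    have hinner : K⁻¹ * ⟪h' b, Δ⟫ - K⁻¹ * ⟪h' a, Δ⟫ = ‖Δ‖ ^ 2 / K := by
      rw [← mul_sub, ← inner_sub_left, real_inner_self_eq_norm_sq, inv_mul_eq_div]
    have hnorm : K / 2 * (K⁻¹ * ‖Δ‖) ^ 2 = ‖Δ‖ ^ 2 / K / 2 := by field_simp
    linarith
  have hxy := key x y
  have hyx := key y x
  rw [norm_sub_rev, ← neg_sub y x, inner_neg_right] at hyx
  rw [← div_le_iff₀' hK, inner_sub_left]
  linarith

theorem norm_sub_sq_le_mul_inner_sub {h : E → ℝ} {h' : E → E} {K : ℝ} (hK : 0 ≤ K)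
    (hlow : ∀ x y, h x + ⟪h' x, y - x⟫ ≤ h y)
    (hup : ∀ x y, h y ≤ h x + ⟪h' x, y - x⟫ + K / 2 * ‖y - x‖ ^ 2) (x y : E) :
    ‖h' y - h' x‖ ^ 2 ≤ K * ⟪h' y - h' x, y - x⟫ := by
  have hlarger : ∀ K' > K, ‖h' y - h' x‖ ^ 2 ≤ K' * ⟪h' y - h' x, y - x⟫ := fun K' hK' =>
    norm_sub_sq_le_mul_inner_sub_of_pos (hK.trans_lt hK') hlow
      (fun a b => (hup a b).trans (by gcongr)) x y
  exact ge_of_tendsto (((continuous_mul_const _).tendsto K).mono_left nhdsWithin_le_nhds)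
    (eventually_nhdsWithin_of_forall (s := Set.Ioi K) hlarger)

section Gradient

variable [CompleteSpace E] {f : E → ℝ} {f' : E → E}

theorem le_add_inner_add_of_lipschitz_gradient {L : ℝ} (hf : ∀ x, HasGradientAt f (f' x) x)
    (hlip : ∀ x y, ‖f' y - f' x‖ ≤ L * ‖y - x‖) (x y : E) :
    f y ≤ f x + ⟪f' x, y - x⟫ + L / 2 * ‖y - x‖ ^ 2 := by
  set v := y - x
  set φ : ℝ → ℝ := fun t => f (x + t • v) - t * ⟪f' x, v⟫ - L / 2 * t ^ 2 * ‖v‖ ^ 2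
  have hφ : ∀ t, HasDerivAt φ (⟪f' (x + t • v) - f' x, v⟫ - L * t * ‖v‖ ^ 2) t := by
    intro t
    have hline : HasDerivAt (fun t : ℝ => x + t • v) v t := by
      simpa using ((hasDerivAt_id t).smul_const v).const_add x
    have hf_line := (hf (x + t • v)).hasFDerivAt.comp_hasDerivAt t hline
    simp only [InnerProductSpace.toDual_apply_apply] at hf_line
    refine ((hf_line.sub ((hasDerivAt_id t).mul_const ⟪f' x, v⟫)).sub
      (((hasDerivAt_pow 2 t).const_mul (L / 2)).mul_const (‖v‖ ^ 2))).congr_deriv ?_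
    rw [inner_sub_left]
    push_cast
    ring
  have hanti : AntitoneOn φ (Set.Icc 0 1) := by
    refine antitoneOn_of_hasDerivWithinAt_nonpos (convex_Icc 0 1)
      (fun t _ => (hφ t).continuousAt.continuousWithinAt) (fun t _ => (hφ t).hasDerivWithinAt)
      fun t ht => ?_
    rw [interior_Icc] at ht
    have hstep : ‖f' (x + t • v) - f' x‖ ≤ L * (t * ‖v‖) := by
      simpa [norm_smul, abs_of_pos ht.1] using hlip x (x + t • v)
    calc ⟪f' (x + t • v) - f' x, v⟫ - L * t * ‖v‖ ^ 2
        ≤ ‖f' (x + t • v) - f' x‖ * ‖v‖ - L * t * ‖v‖ ^ 2 := by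
          gcongr; exact real_inner_le_norm _ _
      _ ≤ L * (t * ‖v‖) * ‖v‖ - L * t * ‖v‖ ^ 2 := by gcongr
      _ = 0 := by ring
  have := hanti (Set.left_mem_Icc.2 zero_le_one) (Set.right_mem_Icc.2 zero_le_one) zero_le_one
  simp only [φ, v, zero_smul, one_smul, add_zero, add_sub_cancel] at this
  linarith

theorem inner_sub_smul_sub_smul_nonpos {m L : ℝ} (hmL : m ≤ L)
    (hf : ∀ x, HasGradientAt f (f' x) x)
    (hsc : ∀ x y, f y ≥ f x + ⟪f' x, y - x⟫ + (m / 2) * ‖y - x‖ ^ 2)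
    (hlip : ∀ x y, ‖f' y - f' x‖ ≤ L * ‖y - x‖) (x y : E) :
    ⟪(f' y - f' x) - m • (y - x), (f' y - f' x) - L • (y - x)⟫ ≤ 0 := by
  set h : E → ℝ := fun z => f z - m / 2 * ‖z‖ ^ 2
  set h' : E → E := fun z => f' z - m • z
  have hinner : ∀ a b, ⟪h' a, b - a⟫ = ⟪f' a, b - a⟫ - m * ⟪a, b - a⟫ := fun a b => by
    rw [inner_sub_left, real_inner_smul_left]
  have hlow : ∀ a b, h a + ⟪h' a, b - a⟫ ≤ h b := fun a b => by
    simp only [h, hinner]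
    linear_combination hsc a b + m / 2 * norm_sq_eq_norm_sq_add_inner_add a b
  have hup : ∀ a b, h b ≤ h a + ⟪h' a, b - a⟫ + (L - m) / 2 * ‖b - a‖ ^ 2 := fun a b => by
    simp only [h, hinner]
    linear_combination le_add_inner_add_of_lipschitz_gradient hf hlip a b
      - m / 2 * norm_sq_eq_norm_sq_add_inner_add a b
  have hco := norm_sub_sq_le_mul_inner_sub (sub_nonneg.2 hmL) hlow hup x y
  have hh' : h' y - h' x = (f' y - f' x) - m • (y - x) := by
    simp only [h', smul_sub]; abel
  have hL : (f' y - f' x) - L • (y - x) = (h' y - h' x) - (L - m) • (y - x) := by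
    rw [hh', sub_smul]; abel
  rw [hL, ← hh', inner_sub_right, real_inner_smul_right, real_inner_self_eq_norm_sq]
  linarith

theorem norm_sub_smul_gradient_sub_le {m L : ℝ} (hmL : m ≤ L)
    (hf : ∀ x, HasGradientAt f (f' x) x)
    (hsc : ∀ x y, f y ≥ f x + ⟪f' x, y - x⟫ + (m / 2) * ‖y - x‖ ^ 2)
    (hlip : ∀ x y, ‖f' y - f' x‖ ≤ L * ‖y - x‖) {xstar : E} (hstar : f' xstar = 0)
    (x : E) (α : ℝ) :
    ‖x - α • f' x - xstar‖ ≤ max |1 - α * m| |1 - α * L| * ‖x - xstar‖ := by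
  have := norm_sub_smul_le_of_inner_nonpos
    (inner_sub_smul_sub_smul_nonpos hmL hf hsc hlip xstar x) α
  rwa [hstar, sub_zero, ← sub_right_comm] at this

end Gradient

end InnerProductSpace

theorem max_abs_one_sub_mul_le {m L c α : ℝ} (hm : 0 < m) (hmL : m ≤ L) (hc : 0 < c)
    (hα : 1 / (c * L) ≤ α ∧ α ≤ c / L) :
    max |1 - α * m| |1 - α * L| ≤ max (c - 1) (1 - m / (c * L)) := by
  have hL : 0 < L := hm.trans_le hmL
  have hα0 : 0 ≤ α := le_trans (by positivity) hα.1
  have hαL : α * L ≤ c := (le_div_iff₀ hL).1 hα.2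
  have hαm : m / (c * L) ≤ α * m := by
    rw [← one_div_mul_eq_div]; exact mul_le_mul_of_nonneg_right hα.1 hm.le
  have hmL' : α * m ≤ α * L := mul_le_mul_of_nonneg_left hmL hα0
  refine max_le (abs_le.2 ⟨?_, ?_⟩) (abs_le.2 ⟨?_, ?_⟩) <;>
    linarith [le_max_left (c - 1) (1 - m / (c * L)), le_max_right (c - 1) (1 - m / (c * L))]

/-- Gradient descent with a line-search step size confined to 𝒜 = [1/(cL), c/L] with
1 ≤ c < 2 converges linearly at the worst-case rate
ρ̄ = max{c − 1, 1 − m/(cL)} < 1 obtained from the sector bound. -/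
theorem stmt_12 {n : ℕ} (m L c : ℝ) (hm : 0 < m) (hmL : m ≤ L)
    (hc1 : 1 ≤ c) (hc2 : c < 2)
    (f : EuclideanSpace ℝ (Fin n) → ℝ)
    (f' : EuclideanSpace ℝ (Fin n) → EuclideanSpace ℝ (Fin n))
    (hdiff : ∀ x, HasGradientAt f (f' x) x)
    (hsc : ∀ x y, f y ≥ f x + ⟪f' x, y - x⟫ + (m / 2) * ‖y - x‖ ^ 2)
    (hlip : ∀ x y, ‖f' y - f' x‖ ≤ L * ‖y - x‖)
    (xstar : EuclideanSpace ℝ (Fin n)) (hstar : f' xstar = 0)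
    (α : ℕ → ℝ) (hα : ∀ k, 1 / (c * L) ≤ α k ∧ α k ≤ c / L)
    (ξ : ℕ → EuclideanSpace ℝ (Fin n))
    (hξ : ∀ k, ξ (k + 1) = ξ k - α k • f' (ξ k)) :
    max (c - 1) (1 - m / (c * L)) < 1 ∧
    ∀ k : ℕ, ‖ξ k - xstar‖ ≤ (max (c - 1) (1 - m / (c * L))) ^ k * ‖ξ 0 - xstar‖ := by
  have hc : 0 < c := by linarith
  have hL : 0 < L := hm.trans_le hmL
  set ρ := max (c - 1) (1 - m / (c * L))
  have hρ : ρ < 1 := max_lt (by linarith) (by linarith [show 0 < m / (c * L) by positivity])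
  have hstep : ∀ k, ‖ξ (k + 1) - xstar‖ ≤ ρ * ‖ξ k - xstar‖ := fun k => by
    rw [hξ]
    exact (norm_sub_smul_gradient_sub_le hmL hdiff hsc hlip hstar (ξ k) (α k)).trans
      (mul_le_mul_of_nonneg_right (max_abs_one_sub_mul_le hm hmL hc (hα k)) (norm_nonneg _))
  have hρ0 : 0 ≤ ρ := (sub_nonneg.2 hc1).trans (le_max_left _ _)
  exact ⟨hρ, fun k => le_geom (u := fun k => ‖ξ k - xstar‖) hρ0 k fun j _ => hstep j⟩
end
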